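/- arXiv:2512.15197 — 3 statements merged into one kernel-verified Lean document; each statement's English description precedes it below -/
import Mathlib

section
/- Let G be a countably infinite amenable group, (X,d) a compact metric space, and consider the shift action of G on X^G with product metric D((x_g),(y_g)) = Σ_{g∈G} α_g d(x_g, y_g), where α_g > 0, Σ α_g < ∞, and α_e = 1. Then the upper metric mean dimension of the shift (G, X^G, D) equals the upper box dimension of (X,d), and the lower metric mean dimension equals the lower box dimension of (X,d). -/
open Filter Set Pointwise Topology MeasureTheory
open scoped symmDiff ENNReal NNReal

section Defs

variable {G : Type*} {X : Type*}

/-- The minimal cardinality of a `(ρ,ε)`-spanning set of `Z`: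
a finite set `E` spans `Z` if every point of `Z` is within distance `ε` of `E`. -/
noncomputable def spanNum (Z : Set X) (ρ : X → X → ℝ) (ε : ℝ) : ℕ :=
  sInf {n : ℕ | ∃ E : Finset X, E.card = n ∧ ∀ x ∈ Z, ∃ y ∈ E, ρ x y ≤ ε}

/-- The maximal cardinality of a `(ρ,ε)`-separated subset of `Z`:
distinct points are at distance `> ε`. -/
noncomputable def sepNum (Z : Set X) (ρ : X → X → ℝ) (ε : ℝ) : ℕ :=
  sSup {n : ℕ | ∃ S : Finset X, ↑S ⊆ Z ∧ S.card = n ∧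
    ∀ x ∈ S, ∀ y ∈ S, x ≠ y → ε < ρ x y}

/-- The Bowen metric `ρ_F(x,y) = max_{g ∈ F} ρ(T_g x, T_g y)`. -/
noncomputable def bowen (T : G → X → X) (ρ : X → X → ℝ) (F : Finset G) (x y : X) : ℝ :=
  sSup ((fun g => ρ (T g x) (T g y)) '' ↑F)

/-- The `ε`-topological entropy of `Z` along the sequence `Fn`,
`limsup_n (1/|F_n|) log s(Z, ρ_{F_n}, ε)`. -/
noncomputable def htopEps (T : G → X → X) (ρ : X → X → ℝ) (Fn : ℕ → Finset G)
    (Z : Set X) (ε : ℝ) : EReal :=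
  limsup (fun n =>
    ((Real.log (sepNum Z (bowen T ρ (Fn n)) ε) / (Fn n).card : ℝ) : EReal)) atTop

/-- Upper metric mean dimension of `Z`. -/
noncomputable def mdimUpper (T : G → X → X) (ρ : X → X → ℝ) (Fn : ℕ → Finset G)
    (Z : Set X) : EReal :=
  limsup (fun ε : ℝ => htopEps T ρ Fn Z ε / ((Real.log (1/ε) : ℝ) : EReal)) (𝓝[>] (0:ℝ))

/-- Lower metric mean dimension of `Z`. -/
noncomputable def mdimLower (T : G → X → X) (ρ : X → X → ℝ) (Fn : ℕ → Finset G)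
    (Z : Set X) : EReal :=
  liminf (fun ε : ℝ => htopEps T ρ Fn Z ε / ((Real.log (1/ε) : ℝ) : EReal)) (𝓝[>] (0:ℝ))

/-- Upper box dimension of the "space" `(X,ρ)`. -/
noncomputable def dimBUpper (ρ : X → X → ℝ) : EReal :=
  limsup (fun ε : ℝ =>
    ((Real.log (spanNum (univ : Set X) ρ ε) / Real.log (1/ε) : ℝ) : EReal)) (𝓝[>] (0:ℝ))

/-- Lower box dimension of the "space" `(X,ρ)`. -/
noncomputable def dimBLower (ρ : X → X → ℝ) : EReal :=
  liminf (fun ε : ℝ =>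
    ((Real.log (spanNum (univ : Set X) ρ ε) / Real.log (1/ε) : ℝ) : EReal)) (𝓝[>] (0:ℝ))

variable [Group G] [DecidableEq G]

/-- A (left) Følner sequence of nonempty finite subsets of `G`. -/
def IsFolner (Fn : ℕ → Finset G) : Prop :=
  (∀ n, (Fn n).Nonempty) ∧ ∀ g : G,
    Tendsto (fun n => ((((Fn n).image (g * ·)) ∆ (Fn n)).card : ℝ) / ((Fn n).card : ℝ))
      atTop (𝓝 0)

/-- A two-sided Følner sequence: also right-asymptotically invariant. -/
def IsTwoSidedFolner (Fn : ℕ → Finset G) : Prop :=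
  IsFolner Fn ∧ ∀ g : G,
    Tendsto (fun n => ((((Fn n).image (· * g)) ∆ (Fn n)).card : ℝ) / ((Fn n).card : ℝ))
      atTop (𝓝 0)

/-- Shulman's temperedness condition on a Følner sequence. -/
def IsTempered (Fn : ℕ → Finset G) : Prop :=
  ∃ C : ℝ, 0 < C ∧ ∀ n : ℕ,
    ((((Finset.range n).biUnion fun j => (Fn j)⁻¹ * Fn n).card : ℝ)) ≤ C * ((Fn n).card : ℝ)

end Defs

/-- The right shift action `σ_h(x) = (x_{gh})_g` of `G` on `X^G`. -/
def shiftAction (G : Type*) [Group G] (X : Type*) : G → (G → X) → (G → X) :=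
  fun h x g => x (g * h)

/-- The product metric `D((x_g),(y_g)) = Σ_g α_g d(x_g,y_g)` on `X^G`. -/
noncomputable def prodShiftDist {G : Type*} {X : Type*} [MetricSpace X]
    (a : G → ℝ) (x y : G → X) : ℝ :=
  ∑' g : G, a g * dist (x g) (y g)

section AuxLimsup

variable {α : Type*} {l : Filter α}

lemma limsup_le_coe_of_tendsto [l.NeBot] {f : α → EReal} {g : α → ℝ} {L : ℝ}
    (h : ∀ᶠ x in l, f x ≤ (g x : EReal)) (hg : Filter.Tendsto g l (nhds L)) :
    Filter.limsup f l ≤ (L : EReal) := by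
  have hg' : Filter.limsup (fun x => (g x : EReal)) l = (L : EReal) :=
    (EReal.tendsto_coe.2 hg).limsup_eq
  rw [← hg']
  exact Filter.limsup_le_limsup h

lemma coe_le_limsup_of_eventually [l.NeBot] {f : α → ℝ} {c : ℝ}
    (h : ∀ᶠ x in l, c ≤ f x) : (c : EReal) ≤ Filter.limsup (fun x => (f x : EReal)) l := by
  have := Filter.limsup_le_limsup (f := l) (u := fun _ : α => (c : EReal))
    (v := fun x => (f x : EReal)) (h.mono fun x hx => EReal.coe_le_coe_iff.2 hx)
  rwa [Filter.limsup_const] at this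

lemma liminf_le_coe_of_frequently {f : α → EReal} {g : α → ℝ} {L : ℝ}
    (h : ∃ᶠ x in l, f x ≤ (g x : EReal)) (hg : Filter.Tendsto g l (nhds L)) :
    Filter.liminf f l ≤ (L : EReal) := by
  by_contra h'
  push_neg at h'
  obtain ⟨b, hLb, hbf⟩ := EReal.exists_between_coe_real h'
  have hev1 : ∀ᶠ x in l, (b : EReal) < f x := Filter.eventually_lt_of_lt_liminf hbf
  have hev2 : ∀ᶠ x in l, g x < b :=
    hg.eventually_lt_const (EReal.coe_lt_coe_iff.1 hLb)
  obtain ⟨x, hx1, hx2, hx3⟩ := (h.and_eventually (hev1.and hev2)).exists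
  exact absurd ((hx2.trans_le hx1).trans (EReal.coe_lt_coe_iff.2 hx3)) (lt_irrefl _)

lemma le_of_forall_real_gt {x y : EReal} (h : ∀ b : ℝ, y < b → x ≤ b) : x ≤ y := by
  by_contra h'
  push_neg at h'
  obtain ⟨b, hyb, hbx⟩ := EReal.exists_between_coe_real h'
  exact absurd ((h b hyb).trans_lt hbx) (lt_irrefl _)

end AuxLimsup
section AuxSpan

variable {Y : Type*} [MetricSpace Y] [CompactSpace Y]

lemma exists_span {ε : ℝ} (hε : 0 < ε) :
    ∃ E : Finset Y, ∀ x : Y, ∃ y ∈ E, dist x y ≤ ε := by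
  obtain ⟨t, -, htf, hts⟩ := finite_cover_balls_of_compact (isCompact_univ : IsCompact (univ : Set Y)) hε
  refine ⟨htf.toFinset, fun x => ?_⟩
  have hx : x ∈ ⋃ y ∈ t, Metric.ball y ε := hts (mem_univ x)
  obtain ⟨y, hy, hxy⟩ := mem_iUnion₂.1 hx
  exact ⟨y, htf.mem_toFinset.2 hy, (Metric.mem_ball.1 hxy).le⟩

lemma spanNum_spec {ε : ℝ} (hε : 0 < ε) :
    ∃ E : Finset Y, E.card = spanNum (univ : Set Y) dist ε ∧
      ∀ x : Y, ∃ y ∈ E, dist x y ≤ ε := by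
  obtain ⟨E₀, hE₀⟩ := exists_span (Y := Y) hε
  have hne : {n : ℕ | ∃ E : Finset Y, E.card = n ∧
      ∀ x ∈ (univ : Set Y), ∃ y ∈ E, dist x y ≤ ε}.Nonempty :=
    ⟨E₀.card, E₀, rfl, fun x _ => hE₀ x⟩
  obtain ⟨E, hcard, hspan⟩ := Nat.sInf_mem hne
  exact ⟨E, hcard, fun x => hspan x (mem_univ x)⟩

lemma one_le_spanNum [Nonempty Y] {ε : ℝ} (hε : 0 < ε) :
    1 ≤ spanNum (univ : Set Y) dist ε := by
  obtain ⟨E, hcard, hspan⟩ := spanNum_spec (Y := Y) hε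
  rcases Nat.eq_zero_or_pos (spanNum (univ : Set Y) dist ε) with h | h
  · exfalso
    obtain ⟨y, hy, -⟩ := hspan (Classical.arbitrary Y)
    rw [h, Finset.card_eq_zero] at hcard
    simp [hcard] at hy
  · exact h

lemma sep_card_bound {ε : ℝ} (hε : 0 < ε) (S : Finset Y)
    (hS : ∀ x ∈ S, ∀ y ∈ S, x ≠ y → ε < dist x y) :
    S.card ≤ spanNum (univ : Set Y) dist (ε / 2) := by
  obtain ⟨E, hcard, hspan⟩ := spanNum_spec (Y := Y) (by linarith : (0:ℝ) < ε / 2)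
  have hspan' : ∀ x : Y, ∃ y, y ∈ E ∧ dist x y ≤ ε / 2 := by
    intro x; obtain ⟨y, hy, hxy⟩ := hspan x; exact ⟨y, hy, hxy⟩
  choose φ hφE hφd using hspan'
  rw [← hcard]
  refine Finset.card_le_card_of_injOn φ (fun x _ => hφE x) ?_
  intro x hx y hy hxy
  by_contra hne
  have h1 : dist x y ≤ dist x (φ x) + dist y (φ x) := dist_triangle_right x y (φ x)
  have h2 : dist y (φ x) ≤ ε / 2 := by rw [hxy]; exact hφd y
  have := hS x hx y hy hne
  have := hφd x
  linarith

lemma sepNum_le_spanNum_half {ε : ℝ} (hε : 0 < ε) :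
    sepNum (univ : Set Y) dist ε ≤ spanNum (univ : Set Y) dist (ε / 2) := by
  refine csSup_le ⟨0, ∅, by simp⟩ ?_
  rintro n ⟨S, -, rfl, hsep⟩
  exact sep_card_bound hε S hsep

lemma bddAbove_sepSet {ε : ℝ} (hε : 0 < ε) :
    BddAbove {n : ℕ | ∃ S : Finset Y, ↑S ⊆ (univ : Set Y) ∧ S.card = n ∧
      ∀ x ∈ S, ∀ y ∈ S, x ≠ y → ε < dist x y} := by
  refine ⟨spanNum (univ : Set Y) dist (ε / 2), ?_⟩
  rintro n ⟨S, -, rfl, hsep⟩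
  exact sep_card_bound hε S hsep

lemma sepNum_mem {ε : ℝ} (hε : 0 < ε) :
    ∃ S : Finset Y, S.card = sepNum (univ : Set Y) dist ε ∧
      ∀ x ∈ S, ∀ y ∈ S, x ≠ y → ε < dist x y := by
  have hne : {n : ℕ | ∃ S : Finset Y, ↑S ⊆ (univ : Set Y) ∧ S.card = n ∧
      ∀ x ∈ S, ∀ y ∈ S, x ≠ y → ε < dist x y}.Nonempty := ⟨0, ∅, by simp, rfl, by simp⟩
  obtain ⟨S, -, hcard, hsep⟩ := Nat.sSup_mem hne (bddAbove_sepSet hε)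
  exact ⟨S, hcard, hsep⟩

lemma spanNum_le_sepNum {ε : ℝ} (hε : 0 < ε) :
    spanNum (univ : Set Y) dist ε ≤ sepNum (univ : Set Y) dist ε := by
  classical
  obtain ⟨S, hcard, hsep⟩ := sepNum_mem (Y := Y) hε
  have hspan : ∀ x ∈ (univ : Set Y), ∃ y ∈ S, dist x y ≤ ε := by
    intro x _
    by_contra hcon
    push_neg at hcon
    have hxS : x ∉ S := fun hx => by have := hcon x hx; simp at this; linarith
    have hmem : (S.card + 1) ∈ {n : ℕ | ∃ S' : Finset Y, ↑S' ⊆ (univ : Set Y) ∧ S'.card = n ∧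
        ∀ u ∈ S', ∀ v ∈ S', u ≠ v → ε < dist u v} := by
      refine ⟨insert x S, by simp, by rw [Finset.card_insert_of_notMem hxS], ?_⟩
      intro u hu v hv huv
      rcases Finset.mem_insert.1 hu with hux | huS
      · rcases Finset.mem_insert.1 hv with hvx | hvS
        · exact absurd (hux.trans hvx.symm) huv
        · rw [hux]; exact hcon v hvS
      · rcases Finset.mem_insert.1 hv with hvx | hvS
        · rw [hvx, dist_comm]; exact hcon u huS
        · exact hsep u huS v hvS huv
    have h2 : S.card + 1 ≤ sepNum (univ : Set Y) dist ε :=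
      le_csSup (bddAbove_sepSet hε) hmem
    omega
  exact Nat.sInf_le ⟨S, hcard ▸ rfl, hspan⟩

lemma one_le_sepNum [Nonempty Y] {ε : ℝ} (hε : 0 < ε) :
    1 ≤ sepNum (univ : Set Y) dist ε :=
  (one_le_spanNum hε).trans (spanNum_le_sepNum hε)

end AuxSpan
section AuxShift

variable {G : Type*} [Group G] [DecidableEq G] {X : Type*} [MetricSpace X] [CompactSpace X]
  {a : G → ℝ}

lemma summable_dist_aux (hsum : Summable a) (ha : ∀ g, 0 ≤ a g) {C : ℝ}
    (hC : ∀ x y : X, dist x y ≤ C) (x y : G → X) :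
    Summable (fun g => a g * dist (x g) (y g)) :=
  Summable.of_nonneg_of_le (fun g => mul_nonneg (ha g) dist_nonneg)
    (fun g => mul_le_mul_of_nonneg_left (hC _ _) (ha g)) (hsum.mul_right C)

lemma coord_le_prodShiftDist (hsum : Summable a) (ha : ∀ g, 0 ≤ a g) {C : ℝ}
    (hC : ∀ x y : X, dist x y ≤ C) (x y : G → X) (g₀ : G) :
    a g₀ * dist (x g₀) (y g₀) ≤ prodShiftDist a x y :=
  Summable.le_tsum (summable_dist_aux hsum ha hC x y) g₀
    (fun j _ => mul_nonneg (ha j) dist_nonneg)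

lemma le_bowen {T : G → (G → X) → (G → X)} {ρ : (G → X) → (G → X) → ℝ} {F : Finset G}
    {h : G} (hh : h ∈ F) (x y : G → X) :
    ρ (T h x) (T h y) ≤ bowen T ρ F x y :=
  le_csSup ((F.finite_toSet.image _).bddAbove) ⟨h, hh, rfl⟩

lemma bowen_le {T : G → (G → X) → (G → X)} {ρ : (G → X) → (G → X) → ℝ} {F : Finset G}
    {x y : G → X} {r : ℝ} (hr : 0 ≤ r) (h : ∀ g ∈ F, ρ (T g x) (T g y) ≤ r) :
    bowen T ρ F x y ≤ r := by
  refine Real.sSup_le ?_ hr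
  rintro _ ⟨g, hg, rfl⟩
  exact h g hg

lemma lowerCore [Nonempty X] (hsum : Summable a) (ha : ∀ g, 0 < a g) (hae : a 1 = 1)
    {C : ℝ} (hC : ∀ x y : X, dist x y ≤ C) {ε : ℝ} (hε : 0 < ε) (F : Finset G) :
    ∃ S : Finset (G → X),
      S.card = sepNum (univ : Set X) dist ε ^ F.card ∧
      ∀ x ∈ S, ∀ y ∈ S, x ≠ y →
        ε < bowen (shiftAction G X) (prodShiftDist a) F x y := by
  classical
  obtain ⟨S₀, hS₀card, hS₀sep⟩ := sepNum_mem (Y := X) hε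
  set x₀ := Classical.arbitrary X with hx₀
  set Φ : (∀ g ∈ F, X) → (G → X) :=
    fun p g => if h : g ∈ F then p g h else x₀ with hΦ
  have hinj : Set.InjOn Φ ↑(F.pi fun _ => S₀) := by
    intro p hp q hq hpq
    funext g hg
    have := congrFun hpq g
    simpa [hΦ, dif_pos hg] using this
  refine ⟨(F.pi fun _ => S₀).image Φ, ?_, ?_⟩
  · rw [Finset.card_image_of_injOn hinj, Finset.card_pi, Finset.prod_const, hS₀card]
  · intro x hx y hy hxy
    obtain ⟨p, hp, rfl⟩ := Finset.mem_image.1 hx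
    obtain ⟨q, hq, rfl⟩ := Finset.mem_image.1 hy
    have hex : ∃ h ∈ F, Φ p h ≠ Φ q h := by
      by_contra hcon
      push_neg at hcon
      refine hxy (funext fun g => ?_)
      by_cases hg : g ∈ F
      · exact hcon g hg
      · simp [hΦ, dif_neg hg]
    obtain ⟨h, hhF, hne⟩ := hex
    have hpS : Φ p h ∈ S₀ := by
      simp only [hΦ, dif_pos hhF]
      exact Finset.mem_pi.1 hp h hhF
    have hqS : Φ q h ∈ S₀ := by
      simp only [hΦ, dif_pos hhF]
      exact Finset.mem_pi.1 hq h hhF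
    have hsep := hS₀sep _ hpS _ hqS hne
    have heq : dist (Φ p h) (Φ q h) =
        a 1 * dist (shiftAction G X h (Φ p) 1) (shiftAction G X h (Φ q) 1) := by
      simp [shiftAction, hae, one_mul]
    have hle : a 1 * dist (shiftAction G X h (Φ p) 1) (shiftAction G X h (Φ q) 1) ≤
        prodShiftDist a (shiftAction G X h (Φ p)) (shiftAction G X h (Φ q)) :=
      coord_le_prodShiftDist hsum (fun g => (ha g).le) hC _ _ 1
    calc ε < dist (Φ p h) (Φ q h) := hsep
    _ ≤ prodShiftDist a (shiftAction G X h (Φ p)) (shiftAction G X h (Φ q)) := heq ▸ hle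
    _ ≤ _ := le_bowen hhF _ _

end AuxShift
section AuxUpper

set_option linter.unusedSectionVars false

variable {G : Type*} [Group G] [DecidableEq G] {X : Type*} [MetricSpace X] [CompactSpace X]
  {a : G → ℝ}

lemma upperCore [Nonempty X] (hsum : Summable a) (ha : ∀ g, 0 < a g)
    {C : ℝ} (hC : ∀ x y : X, dist x y ≤ C) (hC0 : 0 ≤ C) {ε δ : ℝ} (hε : 0 < ε) (hδ : 0 < δ)
    (hδ' : 2 * δ * (∑' g, a g) ≤ ε / 2) :
    ∃ K : Finset G, (1 : G) ∈ K ∧ ∀ F : Finset G, ∀ S : Finset (G → X),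
      (∀ x ∈ S, ∀ y ∈ S, x ≠ y → ε < bowen (shiftAction G X) (prodShiftDist a) F x y) →
      S.card ≤ spanNum (univ : Set X) dist δ ^ (K * F).card := by
  classical
  -- choose the finite window K with small tail
  have htail0 : (0:ℝ) < ε / (2 * (C + 1)) := by positivity
  obtain ⟨K₀, hK₀⟩ := hsum.tsum_vanishing (Metric.ball_mem_nhds 0 htail0)
  set K : Finset G := insert 1 K₀ with hK
  have h1K : (1 : G) ∈ K := Finset.mem_insert_self _ _
  have hdisj : Disjoint {g : G | g ∉ K} ↑K₀ := by
    rw [Set.disjoint_left]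
    intro g hg hg'
    exact hg (Finset.mem_insert_of_mem hg')
  have htail : (∑' g : {g : G // g ∉ K}, a g) < ε / (2 * (C + 1)) := by
    have := hK₀ {g : G | g ∉ K} hdisj
    rw [Metric.mem_ball, Real.dist_eq, sub_zero, abs_lt] at this
    exact this.2
  -- spanning set at scale δ
  obtain ⟨E, hEcard, hEspan⟩ := spanNum_spec (Y := X) hδ
  have hEspan' : ∀ x : X, ∃ y, y ∈ E ∧ dist x y ≤ δ := by
    intro x; obtain ⟨y, hy, hxy⟩ := hEspan x; exact ⟨y, hy, hxy⟩
  choose φ hφE hφd using hEspan'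
  refine ⟨K, h1K, fun F S hS => ?_⟩
  set ψ : (G → X) → (∀ g ∈ K * F, X) := fun x g _ => φ (x g) with hψ
  have hmaps : ∀ x ∈ S, ψ x ∈ (K * F).pi fun _ => E :=
    fun x _ => Finset.mem_pi.2 fun g hg => hφE (x g)
  have hinj : Set.InjOn ψ ↑S := by
    intro x hx y hy hxy
    by_contra hne
    -- coordinates in K * F are 2δ-close
    have hclose : ∀ g ∈ K * F, dist (x g) (y g) ≤ 2 * δ := by
      intro g hg
      have hφeq : φ (x g) = φ (y g) := by
        have := congrFun hxy g
        have := congrFun this hg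
        simpa [hψ] using this
      have h1 : dist (x g) (y g) ≤ dist (x g) (φ (x g)) + dist (y g) (φ (x g)) :=
        dist_triangle_right _ _ _
      have h2 : dist (y g) (φ (x g)) ≤ δ := by rw [hφeq]; exact hφd (y g)
      have := hφd (x g)
      linarith
    have hbow : bowen (shiftAction G X) (prodShiftDist a) F x y ≤ ε := by
      refine bowen_le hε.le fun h hh => ?_
      have hsummand : Summable (fun g => a g * dist (x (g * h)) (y (g * h))) :=
        summable_dist_aux hsum (fun g => (ha g).le) hC _ _
      have hsplit : prodShiftDist a (shiftAction G X h x) (shiftAction G X h y) =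
          (∑ g ∈ K, a g * dist (x (g * h)) (y (g * h))) +
            ∑' g : {g : G // g ∉ K}, a g * dist (x (g * h)) (y (g * h)) :=
        (Summable.sum_add_tsum_subtype_compl hsummand K).symm
      have hmain : (∑ g ∈ K, a g * dist (x (g * h)) (y (g * h))) ≤ ε / 2 := by
        have h1 : ∀ g ∈ K, a g * dist (x (g * h)) (y (g * h)) ≤ a g * (2 * δ) := by
          intro g hg
          exact mul_le_mul_of_nonneg_left (hclose _ (Finset.mul_mem_mul hg hh)) (ha g).le
        calc (∑ g ∈ K, a g * dist (x (g * h)) (y (g * h)))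
            ≤ ∑ g ∈ K, a g * (2 * δ) := Finset.sum_le_sum h1
          _ = (∑ g ∈ K, a g) * (2 * δ) := by rw [← Finset.sum_mul]
          _ ≤ (∑' g, a g) * (2 * δ) := by
              refine mul_le_mul_of_nonneg_right ?_ (by linarith)
              exact hsum.sum_le_tsum K (fun g _ => (ha g).le)
          _ ≤ ε / 2 := by nlinarith [hδ']
      have htailbound : (∑' g : {g : G // g ∉ K}, a g * dist (x (g * h)) (y (g * h))) ≤ ε / 2 := by
        have hs1 : Summable (fun g : {g : G // g ∉ K} => a g * dist (x (g * h)) (y (g * h))) :=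
          hsummand.subtype _
        have hs2 : Summable (fun g : {g : G // g ∉ K} => a g * C) :=
          (hsum.mul_right C).subtype _
        calc (∑' g : {g : G // g ∉ K}, a g * dist (x (g * h)) (y (g * h)))
            ≤ ∑' g : {g : G // g ∉ K}, a (g:G) * C := by
              refine hs1.tsum_le_tsum (fun g => ?_) hs2
              exact mul_le_mul_of_nonneg_left (hC _ _) (ha _).le
          _ = (∑' g : {g : G // g ∉ K}, a g) * C := tsum_mul_right
          _ ≤ (ε / (2 * (C + 1))) * C := mul_le_mul_of_nonneg_right htail.le hC0
          _ ≤ ε / 2 := by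
              rw [div_mul_eq_mul_div, div_le_div_iff₀ (by positivity) (by norm_num)]
              nlinarith
      calc prodShiftDist a (shiftAction G X h x) (shiftAction G X h y)
          = _ := hsplit
        _ ≤ ε / 2 + ε / 2 := add_le_add hmain htailbound
        _ = ε := by ring
    exact absurd (hS x hx y hy hne) (not_lt.2 hbow)
  calc S.card ≤ ((K * F).pi fun _ => E).card := Finset.card_le_card_of_injOn ψ hmaps hinj
    _ = E.card ^ (K * F).card := by rw [Finset.card_pi, Finset.prod_const]
    _ = _ := by rw [hEcard]

lemma card_mul_le_folner (K F : Finset G) :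
    (K * F).card ≤ F.card + ∑ k ∈ K, ((F.image (k * ·)) ∆ F).card := by
  classical
  have hsub : K * F ⊆ F ∪ K.biUnion fun k => (F.image (k * ·)) ∆ F := by
    intro x hx
    obtain ⟨k, hk, f, hf, rfl⟩ := Finset.mem_mul.1 hx
    by_cases h : k * f ∈ F
    · exact Finset.mem_union_left _ h
    · refine Finset.mem_union_right _ (Finset.mem_biUnion.2 ⟨k, hk, ?_⟩)
      rw [Finset.mem_symmDiff]
      exact Or.inl ⟨Finset.mem_image.2 ⟨f, hf, rfl⟩, h⟩
  calc (K * F).card ≤ (F ∪ K.biUnion fun k => (F.image (k * ·)) ∆ F).card :=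
        Finset.card_le_card hsub
    _ ≤ F.card + (K.biUnion fun k => (F.image (k * ·)) ∆ F).card := Finset.card_union_le _ _
    _ ≤ _ := by gcongr; exact Finset.card_biUnion_le

end AuxUpper
section AuxHtop

set_option linter.unusedSectionVars false

variable {G : Type*} [Group G] [DecidableEq G] {X : Type*} [MetricSpace X] [CompactSpace X]
  {a : G → ℝ}

lemma htop_sandwich [Nonempty X] (hsum : Summable a) (ha : ∀ g, 0 < a g) (hae : a 1 = 1)
    {C : ℝ} (hC : ∀ x y : X, dist x y ≤ C) (hC0 : 0 ≤ C)
    {Fn : ℕ → Finset G} (hFn : IsFolner Fn) {ε δ : ℝ} (hε : 0 < ε) (hδ : 0 < δ)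
    (hδ' : 2 * δ * (∑' g, a g) ≤ ε / 2) :
    (Real.log (spanNum (univ : Set X) dist ε) : EReal) ≤
        htopEps (shiftAction G X) (prodShiftDist a) Fn (univ : Set (G → X)) ε ∧
      htopEps (shiftAction G X) (prodShiftDist a) Fn (univ : Set (G → X)) ε ≤
        (Real.log (spanNum (univ : Set X) dist δ) : EReal) := by
  classical
  obtain ⟨K, h1K, hKbound⟩ := upperCore hsum ha hC hC0 hε hδ hδ'
  set M := spanNum (univ : Set X) dist δ with hM
  set m := sepNum (univ : Set X) dist ε with hm
  have hM1 : 1 ≤ M := one_le_spanNum hδ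
  have hm1 : 1 ≤ m := one_le_sepNum hε
  set s : ℕ → ℕ := fun n =>
    sepNum (univ : Set (G → X)) (bowen (shiftAction G X) (prodShiftDist a) (Fn n)) ε with hs
  have hbdd : ∀ F : Finset G, BddAbove {n : ℕ | ∃ S : Finset (G → X),
      ↑S ⊆ (univ : Set (G → X)) ∧ S.card = n ∧ ∀ x ∈ S, ∀ y ∈ S, x ≠ y →
        ε < bowen (shiftAction G X) (prodShiftDist a) F x y} := by
    intro F
    refine ⟨M ^ (K * F).card, ?_⟩
    rintro n ⟨S, -, rfl, hsep⟩
    exact hKbound F S hsep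
  have hupper : ∀ F : Finset G,
      sepNum (univ : Set (G → X)) (bowen (shiftAction G X) (prodShiftDist a) F) ε ≤
        M ^ (K * F).card := by
    intro F
    refine csSup_le ⟨0, ∅, by simp, rfl, by simp⟩ ?_
    rintro n ⟨S, -, rfl, hsep⟩
    exact hKbound F S hsep
  have hlow : ∀ n : ℕ, m ^ (Fn n).card ≤ s n := by
    intro n
    obtain ⟨S, hScard, hSsep⟩ := lowerCore hsum ha hae hC hε (Fn n)
    exact le_csSup (hbdd (Fn n)) ⟨S, subset_univ _, hScard, hSsep⟩
  have hcardpos : ∀ n, (0:ℝ) < ((Fn n).card : ℝ) := by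
    intro n
    exact_mod_cast Finset.card_pos.2 (hFn.1 n)
  constructor
  · -- lower bound
    have hterm : ∀ n : ℕ, Real.log m ≤ Real.log (s n) / ((Fn n).card : ℝ) := by
      intro n
      rw [le_div_iff₀ (hcardpos n)]
      have h1 : ((m : ℝ)) ^ (Fn n).card ≤ ((s n : ℕ) : ℝ) := by
        exact_mod_cast hlow n
      have h2 : Real.log ((m:ℝ) ^ (Fn n).card) ≤ Real.log (s n) :=
        Real.log_le_log (pow_pos (by exact_mod_cast hm1) _) h1
      rw [Real.log_pow] at h2
      calc Real.log m * ((Fn n).card : ℝ) = ((Fn n).card : ℝ) * Real.log m := mul_comm _ _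
        _ ≤ _ := h2
    have hstep : (Real.log m : EReal) ≤
        htopEps (shiftAction G X) (prodShiftDist a) Fn (univ : Set (G → X)) ε :=
      coe_le_limsup_of_eventually (Filter.Eventually.of_forall hterm)
    refine le_trans ?_ hstep
    rw [EReal.coe_le_coe_iff]
    refine Real.log_le_log ?_ ?_
    · exact_mod_cast one_le_spanNum (Y := X) hε
    · exact_mod_cast spanNum_le_sepNum (Y := X) hε
  · -- upper bound
    set t : ℕ → ℝ := fun n =>
      (∑ k ∈ K, ((((Fn n).image (k * ·)) ∆ (Fn n)).card : ℝ)) / ((Fn n).card : ℝ) with ht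
    have hterm : ∀ n : ℕ, Real.log (s n) / ((Fn n).card : ℝ) ≤ (1 + t n) * Real.log M := by
      intro n
      have hlogM : 0 ≤ Real.log M := Real.log_natCast_nonneg M
      have hlogs : Real.log (s n) ≤ ((K * Fn n).card : ℝ) * Real.log M := by
        rcases Nat.eq_zero_or_pos (s n) with h | h
        · rw [h]
          simpa using mul_nonneg (by positivity) hlogM
        · have h1 : ((s n : ℕ) : ℝ) ≤ ((M : ℝ)) ^ (K * Fn n).card := by
            exact_mod_cast hupper (Fn n)
          have h2 := Real.log_le_log (by exact_mod_cast h) h1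
          rwa [Real.log_pow] at h2
      have hnum : ((K * Fn n).card : ℝ) * Real.log M ≤
          (((Fn n).card : ℝ) + ∑ k ∈ K, ((((Fn n).image (k * ·)) ∆ (Fn n)).card : ℝ)) *
            Real.log M := by
        refine mul_le_mul_of_nonneg_right ?_ hlogM
        have := card_mul_le_folner K (Fn n)
        push_cast
        exact_mod_cast this
      have hgen : ∀ A B L : ℝ, 0 < A → (A + B) * L / A = (1 + B / A) * L := by
        intro A B L hA
        field_simp
      have heq : (((Fn n).card : ℝ) + ∑ k ∈ K, ((((Fn n).image (k * ·)) ∆ (Fn n)).card : ℝ)) *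
          Real.log M / ((Fn n).card : ℝ) = (1 + t n) * Real.log M :=
        hgen _ _ _ (hcardpos n)
      calc Real.log (s n) / ((Fn n).card : ℝ)
          ≤ ((K * Fn n).card : ℝ) * Real.log M / ((Fn n).card : ℝ) := by
            gcongr
        _ ≤ (((Fn n).card : ℝ) + ∑ k ∈ K, ((((Fn n).image (k * ·)) ∆ (Fn n)).card : ℝ)) *
              Real.log M / ((Fn n).card : ℝ) := by
            gcongr
        _ = (1 + t n) * Real.log M := heq
    have ht0 : Filter.Tendsto t Filter.atTop (nhds 0) := by
      have h1 := tendsto_finset_sum (f := fun (k : G) (n : ℕ) =>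
        (((((Fn n).image (k * ·)) ∆ (Fn n)).card : ℝ) / ((Fn n).card : ℝ))) K
        (fun k _ => hFn.2 k)
      rw [Finset.sum_const_zero] at h1
      exact h1.congr fun n => (Finset.sum_div _ _ _).symm
    have hT : Filter.Tendsto (fun n => (1 + t n) * Real.log M) Filter.atTop
        (nhds (Real.log M)) := by
      have h1 := (ht0.const_add 1).mul_const (Real.log M)
      have h2 : (1 + (0:ℝ)) * Real.log M = Real.log M := by ring
      rwa [h2] at h1
    show Filter.limsup
        (fun n => ((Real.log (s n) / ((Fn n).card : ℝ) : ℝ) : EReal)) Filter.atTop ≤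
      ((Real.log M : ℝ) : EReal)
    exact limsup_le_coe_of_tendsto
      (Filter.Eventually.of_forall fun n => EReal.coe_le_coe_iff.2 (hterm n)) hT

end AuxHtop
section AuxFilter

lemma tendsto_mul_nhdsGT {c : ℝ} (hc : 0 < c) :
    Filter.Tendsto (fun ε : ℝ => c * ε) (nhdsWithin 0 (Set.Ioi 0)) (nhdsWithin 0 (Set.Ioi 0)) := by
  rw [tendsto_nhdsWithin_iff]
  constructor
  · have h1 : Filter.Tendsto (fun ε : ℝ => c * ε) (nhds 0) (nhds (c * 0)) :=
      (continuous_const.mul continuous_id).tendsto 0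
    rw [mul_zero] at h1
    exact h1.mono_left nhdsWithin_le_nhds
  · filter_upwards [self_mem_nhdsWithin] with ε (hε : (0:ℝ) < ε)
    exact mul_pos hc hε

lemma map_mul_nhdsGT {c : ℝ} (hc : 0 < c) :
    Filter.map (fun ε : ℝ => c * ε) (nhdsWithin 0 (Set.Ioi 0)) = nhdsWithin 0 (Set.Ioi 0) := by
  apply le_antisymm
  · exact tendsto_mul_nhdsGT hc
  · have h2 := tendsto_mul_nhdsGT (inv_pos.2 hc)
    have hid : (fun ε : ℝ => c * (c⁻¹ * ε)) = id := by
      funext ε; field_simp; rfl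
    calc nhdsWithin (0:ℝ) (Set.Ioi 0)
        = Filter.map (fun ε : ℝ => c * (c⁻¹ * ε)) (nhdsWithin 0 (Set.Ioi 0)) := by
          rw [hid, Filter.map_id]
      _ = Filter.map (fun ε : ℝ => c * ε)
            (Filter.map (fun ε : ℝ => c⁻¹ * ε) (nhdsWithin 0 (Set.Ioi 0))) := by
          rw [Filter.map_map]; rfl
      _ ≤ Filter.map (fun ε : ℝ => c * ε) (nhdsWithin 0 (Set.Ioi 0)) := Filter.map_mono h2

lemma log_one_div_atTop :
    Filter.Tendsto (fun ε : ℝ => Real.log (1 / ε)) (nhdsWithin 0 (Set.Ioi 0)) Filter.atTop := by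
  have h := tendsto_inv_nhdsGT_zero (𝕜 := ℝ)
  exact Real.tendsto_log_atTop.comp (h.congr fun x => (one_div x).symm)

lemma ratio_tendsto (b L₀ : ℝ) :
    Filter.Tendsto (fun ε : ℝ => b * (L₀ + Real.log (1 / ε)) / Real.log (1 / ε))
      (nhdsWithin 0 (Set.Ioi 0)) (nhds b) := by
  have hG : Filter.Tendsto (fun y : ℝ => b * (L₀ + y) / y) Filter.atTop (nhds b) := by
    have h1 : Filter.Tendsto (fun y : ℝ => b * L₀ / y + b) Filter.atTop (nhds (0 + b)) :=
      (Filter.Tendsto.div_atTop tendsto_const_nhds Filter.tendsto_id).add tendsto_const_nhds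
    rw [zero_add] at h1
    refine h1.congr' ?_
    filter_upwards [Filter.eventually_gt_atTop (0:ℝ)] with y hy
    field_simp
  exact hG.comp log_one_div_atTop

lemma eventually_pos_lt_one :
    ∀ᶠ ε : ℝ in nhdsWithin 0 (Set.Ioi 0), 0 < ε ∧ ε < 1 := by
  have h1 : ∀ᶠ ε : ℝ in nhdsWithin 0 (Set.Ioi 0), (0:ℝ) < ε := by
    filter_upwards [self_mem_nhdsWithin] with ε (hε : (0:ℝ) < ε); exact hε
  have h2 : ∀ᶠ ε : ℝ in nhdsWithin 0 (Set.Ioi 0), ε < 1 :=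
    Filter.eventually_of_mem (mem_nhdsWithin_of_mem_nhds (Iio_mem_nhds one_pos)) fun x hx => hx
  exact h1.and h2

end AuxFilter
/-- for a countably infinite amenable group `G` and a compact metric space
`(X,d)`, the upper (resp. lower) metric mean dimension of the shift on `(X^G, D)`
equals the upper (resp. lower) box dimension of `(X,d)`. -/
theorem mdim_shift_eq_dimB {G : Type*} [Group G] [DecidableEq G] [Countable G] [Infinite G]
    {X : Type*} [MetricSpace X] [CompactSpace X]
    (a : G → ℝ) (ha : ∀ g, 0 < a g) (hsum : Summable a) (hae : a 1 = 1)
    (Fn : ℕ → Finset G) (hFn : IsFolner Fn) :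
    mdimUpper (shiftAction G X) (prodShiftDist a) Fn (univ : Set (G → X)) =
      dimBUpper (dist : X → X → ℝ) ∧
    mdimLower (shiftAction G X) (prodShiftDist a) Fn (univ : Set (G → X)) =
      dimBLower (dist : X → X → ℝ) := by
  classical
  rcases isEmpty_or_nonempty X with hX | hX
  · -- X is empty : everything is zero
    have hXG : IsEmpty (G → X) := ⟨fun f => hX.false (f 1)⟩
    have hspan0 : ∀ ε : ℝ, spanNum (univ : Set X) dist ε = 0 := by
      intro ε
      refine Nat.sInf_eq_zero.2 (Or.inl ?_)
      exact ⟨∅, rfl, fun x _ => (hX.false x).elim⟩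
    have hsep0 : ∀ (n : ℕ) (ε : ℝ),
        sepNum (univ : Set (G → X)) (bowen (shiftAction G X) (prodShiftDist a) (Fn n)) ε = 0 := by
      intro n ε
      refine le_antisymm (csSup_le ⟨0, ∅, by simp, rfl, by simp⟩ ?_) (Nat.zero_le _)
      rintro k ⟨S, -, rfl, -⟩
      simp [Finset.eq_empty_of_isEmpty S]
    have hH : ∀ ε : ℝ,
        htopEps (shiftAction G X) (prodShiftDist a) Fn (univ : Set (G → X)) ε = 0 := by
      intro ε
      have hfun : (fun n : ℕ =>
          ((Real.log (sepNum (univ : Set (G → X))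
            (bowen (shiftAction G X) (prodShiftDist a) (Fn n)) ε) / ((Fn n).card : ℝ) : ℝ) :
              EReal)) = fun _ : ℕ => (0 : EReal) := by
        funext n
        rw [hsep0 n ε]
        norm_num
      show Filter.limsup _ Filter.atTop = (0 : EReal)
      rw [hfun, Filter.limsup_const]
    have hmu : mdimUpper (shiftAction G X) (prodShiftDist a) Fn (univ : Set (G → X)) = 0 := by
      have hfun : (fun ε : ℝ =>
          htopEps (shiftAction G X) (prodShiftDist a) Fn (univ : Set (G → X)) ε /
            ((Real.log (1/ε) : ℝ) : EReal)) = fun _ : ℝ => (0 : EReal) := by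
        funext ε
        rw [hH ε]
        exact EReal.zero_div
      show Filter.limsup _ (nhdsWithin 0 (Set.Ioi 0)) = (0 : EReal)
      rw [hfun, Filter.limsup_const]
    have hml : mdimLower (shiftAction G X) (prodShiftDist a) Fn (univ : Set (G → X)) = 0 := by
      have hfun : (fun ε : ℝ =>
          htopEps (shiftAction G X) (prodShiftDist a) Fn (univ : Set (G → X)) ε /
            ((Real.log (1/ε) : ℝ) : EReal)) = fun _ : ℝ => (0 : EReal) := by
        funext ε
        rw [hH ε]
        exact EReal.zero_div
      show Filter.liminf _ (nhdsWithin 0 (Set.Ioi 0)) = (0 : EReal)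
      rw [hfun, Filter.liminf_const]
    have hfunB : (fun ε : ℝ =>
        ((Real.log (spanNum (univ : Set X) dist ε) / Real.log (1/ε) : ℝ) : EReal)) =
          fun _ : ℝ => (0 : EReal) := by
      funext ε
      rw [hspan0 ε]
      norm_num
    have hbu : dimBUpper (dist : X → X → ℝ) = 0 := by
      show Filter.limsup _ (nhdsWithin 0 (Set.Ioi 0)) = (0 : EReal)
      rw [hfunB, Filter.limsup_const]
    have hbl : dimBLower (dist : X → X → ℝ) = 0 := by
      show Filter.liminf _ (nhdsWithin 0 (Set.Ioi 0)) = (0 : EReal)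
      rw [hfunB, Filter.liminf_const]
    rw [hmu, hml, hbu, hbl]
    exact ⟨rfl, rfl⟩
  · -- X is nonempty
    obtain ⟨C, hC'⟩ := Metric.isBounded_iff.1
      (isCompact_univ : IsCompact (univ : Set X)).isBounded
    have hC : ∀ x y : X, dist x y ≤ C := fun x y => hC' (mem_univ x) (mem_univ y)
    have hC0 : 0 ≤ C := le_trans dist_nonneg (hC (Classical.arbitrary X) (Classical.arbitrary X))
    have hA1 : 1 ≤ ∑' g, a g := by
      have := Summable.le_tsum hsum 1 (fun j _ => (ha j).le)
      rwa [hae] at this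
    have hA0 : (0:ℝ) < ∑' g, a g := lt_of_lt_of_le one_pos hA1
    set c : ℝ := (4 * ∑' g, a g)⁻¹ with hc
    have hc0 : 0 < c := by positivity
    have key : ∀ ε : ℝ, 0 < ε →
        (Real.log (spanNum (univ : Set X) dist ε) : EReal) ≤
            htopEps (shiftAction G X) (prodShiftDist a) Fn (univ : Set (G → X)) ε ∧
          htopEps (shiftAction G X) (prodShiftDist a) Fn (univ : Set (G → X)) ε ≤
            (Real.log (spanNum (univ : Set X) dist (c * ε)) : EReal) := by
      intro ε hε
      refine htop_sandwich hsum ha hae hC hC0 hFn hε (by positivity) ?_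
      have : 2 * (c * ε) * (∑' g, a g) = ε / 2 := by
        rw [hc]
        field_simp
        ring
      exact le_of_eq this
    have hEv := eventually_pos_lt_one
    -- pointwise comparison of the two quotient functions
    have hQU : ∀ᶠ ε : ℝ in nhdsWithin 0 (Set.Ioi 0),
        ((Real.log (spanNum (univ : Set X) dist ε) / Real.log (1/ε) : ℝ) : EReal) ≤
          htopEps (shiftAction G X) (prodShiftDist a) Fn (univ : Set (G → X)) ε /
            ((Real.log (1/ε) : ℝ) : EReal) := by
      filter_upwards [hEv] with ε hε
      obtain ⟨hε0, hε1⟩ := hε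
      have hL : (0:ℝ) < Real.log (1/ε) := Real.log_pos ((one_lt_div hε0).2 hε1)
      calc ((Real.log (spanNum (univ : Set X) dist ε) / Real.log (1/ε) : ℝ) : EReal)
          = (Real.log (spanNum (univ : Set X) dist ε) : EReal) /
              ((Real.log (1/ε) : ℝ) : EReal) := EReal.coe_div _ _
        _ ≤ _ := EReal.div_le_div_right_of_nonneg (by exact_mod_cast hL.le) (key ε hε0).1
    -- pointwise form of the dominating estimate
    have hpt : ∀ b ε : ℝ, 0 < ε → ε < 1 →
        Real.log (spanNum (univ : Set X) dist (c * ε)) ≤ b * Real.log (1/(c * ε)) →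
          htopEps (shiftAction G X) (prodShiftDist a) Fn (univ : Set (G → X)) ε /
              ((Real.log (1/ε) : ℝ) : EReal) ≤
            ((b * (Real.log (1/c) + Real.log (1/ε)) / Real.log (1/ε) : ℝ) : EReal) := by
      intro b ε hε0 hε1 hcε
      have hL : (0:ℝ) < Real.log (1/ε) := Real.log_pos ((one_lt_div hε0).2 hε1)
      have hlogsplit : Real.log (1/(c * ε)) = Real.log (1/c) + Real.log (1/ε) := by
        rw [show (1:ℝ)/(c * ε) = (1/c) * (1/ε) by field_simp]
        exact Real.log_mul (by positivity) (by positivity)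
      have h1 : htopEps (shiftAction G X) (prodShiftDist a) Fn (univ : Set (G → X)) ε ≤
          ((b * (Real.log (1/c) + Real.log (1/ε)) : ℝ) : EReal) := by
        refine (key ε hε0).2.trans ?_
        rw [EReal.coe_le_coe_iff, ← hlogsplit]
        exact hcε
      calc htopEps (shiftAction G X) (prodShiftDist a) Fn (univ : Set (G → X)) ε /
            ((Real.log (1/ε) : ℝ) : EReal)
          ≤ ((b * (Real.log (1/c) + Real.log (1/ε)) : ℝ) : EReal) /
              ((Real.log (1/ε) : ℝ) : EReal) :=
            EReal.div_le_div_right_of_nonneg (by exact_mod_cast hL.le) h1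
        _ = _ := (EReal.coe_div _ _).symm
    constructor
    · -- upper
      refine le_antisymm ?_ (Filter.limsup_le_limsup hQU)
      have hB0 : (0 : EReal) ≤ dimBUpper (dist : X → X → ℝ) := by
        have h0 : ((0:ℝ) : EReal) ≤ Filter.limsup (fun ε : ℝ =>
            ((Real.log (spanNum (univ : Set X) dist ε) / Real.log (1/ε) : ℝ) : EReal))
            (nhdsWithin 0 (Set.Ioi 0)) := by
          refine coe_le_limsup_of_eventually ?_
          filter_upwards [hEv] with ε hε
          obtain ⟨hε0, hε1⟩ := hε
          have hL : (0:ℝ) < Real.log (1/ε) := Real.log_pos ((one_lt_div hε0).2 hε1)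
          exact div_nonneg (Real.log_natCast_nonneg _) hL.le
        exact_mod_cast h0
      refine le_of_forall_real_gt ?_
      intro b hb
      have hev : ∀ᶠ δ : ℝ in nhdsWithin 0 (Set.Ioi 0),
          (fun δ : ℝ => ((Real.log (spanNum (univ : Set X) dist δ) / Real.log (1/δ) : ℝ) :
            EReal)) δ < (b : EReal) :=
        Filter.eventually_lt_of_limsup_lt hb
      have hev' : ∀ᶠ δ : ℝ in nhdsWithin 0 (Set.Ioi 0),
          Real.log (spanNum (univ : Set X) dist δ) ≤ b * Real.log (1/δ) := by
        filter_upwards [hev, hEv] with δ hδlt hδ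
        obtain ⟨hδ0, hδ1⟩ := hδ
        have hL : (0:ℝ) < Real.log (1/δ) := Real.log_pos ((one_lt_div hδ0).2 hδ1)
        have h2 : Real.log (spanNum (univ : Set X) dist δ) / Real.log (1/δ) < b :=
          EReal.coe_lt_coe_iff.1 hδlt
        exact le_of_lt ((div_lt_iff₀ hL).1 h2)
      have hevc : ∀ᶠ ε : ℝ in nhdsWithin 0 (Set.Ioi 0),
          Real.log (spanNum (univ : Set X) dist (c * ε)) ≤ b * Real.log (1/(c * ε)) :=
        (tendsto_mul_nhdsGT hc0).eventually hev'
      refine limsup_le_coe_of_tendsto ?_ (ratio_tendsto b (Real.log (1/c)))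
      filter_upwards [hevc, hEv] with ε hcε hh
      exact hpt b ε hh.1 hh.2 hcε
    · -- lower
      refine le_antisymm ?_ (Filter.liminf_le_liminf hQU)
      refine le_of_forall_real_gt ?_
      intro b hb
      have hfreq : ∃ᶠ δ : ℝ in nhdsWithin 0 (Set.Ioi 0),
          (fun δ : ℝ => ((Real.log (spanNum (univ : Set X) dist δ) / Real.log (1/δ) : ℝ) :
            EReal)) δ < (b : EReal) :=
        Filter.frequently_lt_of_liminf_lt (h := hb)
      have hfreq' : ∃ᶠ δ : ℝ in nhdsWithin 0 (Set.Ioi 0),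
          Real.log (spanNum (univ : Set X) dist δ) ≤ b * Real.log (1/δ) := by
        refine (hfreq.and_eventually hEv).mono ?_
        rintro δ ⟨hδlt, hδ0, hδ1⟩
        have hL : (0:ℝ) < Real.log (1/δ) := Real.log_pos ((one_lt_div hδ0).2 hδ1)
        have h2 : Real.log (spanNum (univ : Set X) dist δ) / Real.log (1/δ) < b :=
          EReal.coe_lt_coe_iff.1 hδlt
        exact le_of_lt ((div_lt_iff₀ hL).1 h2)
      -- transfer the frequently statement along ε ↦ c * ε using an eventually bound
      have h3 : ∃ᶠ ε : ℝ in nhdsWithin 0 (Set.Ioi 0),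
          Real.log (spanNum (univ : Set X) dist (c * ε)) ≤ b * Real.log (1/(c * ε)) := by
        rw [← map_mul_nhdsGT hc0] at hfreq'
        exact Filter.frequently_map.1 hfreq'
      have hfreqQ : ∃ᶠ ε : ℝ in nhdsWithin 0 (Set.Ioi 0),
          htopEps (shiftAction G X) (prodShiftDist a) Fn (univ : Set (G → X)) ε /
              ((Real.log (1/ε) : ℝ) : EReal) ≤
            ((b * (Real.log (1/c) + Real.log (1/ε)) / Real.log (1/ε) : ℝ) : EReal) := by
        refine (h3.and_eventually hEv).mono ?_
        rintro ε ⟨hcε, hε0, hε1⟩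
        exact hpt b ε hε0 hε1 hcε
      exact liminf_le_coe_of_frequently hfreqQ (ratio_tendsto b (Real.log (1/c)))
end

section
/- Let G be a finite group acting on a compact metric space (X,d) by homeomorphisms such that T_g is Lipschitz for every g ≠ e_G. Then mdim̄_M(G,X,d) = (1/|G|)·dim̄_B(X,d) and mdim̲_M(G,X,d) = (1/|G|)·dim̲_B(X,d). -/
open Filter Set Pointwise Topology MeasureTheory
open scoped symmDiff ENNReal NNReal

section AuxLemmas

variable {X : Type*}

lemma spanNum_le_of_span {Z : Set X} {ρ : X → X → ℝ} {ε : ℝ} (E : Finset X)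
    (hE : ∀ x ∈ Z, ∃ y ∈ E, ρ x y ≤ ε) : spanNum Z ρ ε ≤ E.card :=
  Nat.sInf_le ⟨E, rfl, hE⟩

lemma exists_span_witness {Z : Set X} {ρ : X → X → ℝ} {ε : ℝ}
    (h : ∃ E : Finset X, ∀ x ∈ Z, ∃ y ∈ E, ρ x y ≤ ε) :
    ∃ E : Finset X, E.card = spanNum Z ρ ε ∧ ∀ x ∈ Z, ∃ y ∈ E, ρ x y ≤ ε := by
  obtain ⟨E, hE⟩ := h
  have hne : {n : ℕ | ∃ E : Finset X, E.card = n ∧ ∀ x ∈ Z, ∃ y ∈ E, ρ x y ≤ ε}.Nonempty :=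
    ⟨E.card, E, rfl, hE⟩
  exact Nat.sInf_mem hne

lemma sep_card_le_span_card {Z : Set X} {ρ : X → X → ℝ} {ε δ : ℝ}
    (htri : ∀ a b z : X, ρ a b ≤ ρ a z + ρ b z) (h2 : 2 * ε ≤ δ)
    (E : Finset X) (hE : ∀ x ∈ Z, ∃ y ∈ E, ρ x y ≤ ε)
    (S : Finset X) (hSZ : ↑S ⊆ Z) (hsep : ∀ x ∈ S, ∀ y ∈ S, x ≠ y → δ < ρ x y) :
    S.card ≤ E.card := by
  classical
  have h : ∀ s ∈ S, ∃ y ∈ E, ρ s y ≤ ε := fun s hs => hE s (hSZ hs)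
  choose! f hfE hfρ using h
  refine Finset.card_le_card_of_injOn f (fun s hs => hfE s hs) ?_
  intro a ha b hb hfab
  by_contra hne
  have ha' : a ∈ S := ha
  have hb' : b ∈ S := hb
  have hab : ρ a b ≤ 2 * ε := by
    have h1 := hfρ a ha'
    have h2' := hfρ b hb'
    have htt := htri a b (f b)
    rw [hfab] at h1
    linarith
  exact absurd (hsep a ha' b hb' hne) (not_lt.2 (hab.trans h2))

/-- The separated-set cardinality set. -/
def sepSet (Z : Set X) (ρ : X → X → ℝ) (ε : ℝ) : Set ℕ :=
  {n : ℕ | ∃ S : Finset X, ↑S ⊆ Z ∧ S.card = n ∧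
    ∀ x ∈ S, ∀ y ∈ S, x ≠ y → ε < ρ x y}

lemma sepNum_eq_sSup (Z : Set X) (ρ : X → X → ℝ) (ε : ℝ) :
    sepNum Z ρ ε = sSup (sepSet Z ρ ε) := rfl

lemma zero_mem_sepSet (Z : Set X) (ρ : X → X → ℝ) (ε : ℝ) : 0 ∈ sepSet Z ρ ε :=
  ⟨∅, by simp, by simp, by simp⟩

lemma sepSet_bddAbove {Z : Set X} {ρ : X → X → ℝ} {ε δ : ℝ}
    (htri : ∀ a b z : X, ρ a b ≤ ρ a z + ρ b z) (h2 : 2 * ε ≤ δ)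
    (E : Finset X) (hE : ∀ x ∈ Z, ∃ y ∈ E, ρ x y ≤ ε) :
    BddAbove (sepSet Z ρ δ) := by
  refine ⟨E.card, ?_⟩
  rintro n ⟨S, hSZ, rfl, hsep⟩
  exact sep_card_le_span_card htri h2 E hE S hSZ hsep

lemma sepNum_le_span_card {Z : Set X} {ρ : X → X → ℝ} {ε δ : ℝ}
    (htri : ∀ a b z : X, ρ a b ≤ ρ a z + ρ b z) (h2 : 2 * ε ≤ δ)
    (E : Finset X) (hE : ∀ x ∈ Z, ∃ y ∈ E, ρ x y ≤ ε) :
    sepNum Z ρ δ ≤ E.card := by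
  rw [sepNum_eq_sSup]
  refine csSup_le ⟨0, zero_mem_sepSet Z ρ δ⟩ ?_
  rintro n ⟨S, hSZ, rfl, hsep⟩
  exact sep_card_le_span_card htri h2 E hE S hSZ hsep

lemma spanNum_le_sepNum_s9 {Z : Set X} {ρ : X → X → ℝ} {ε : ℝ} (hε : 0 ≤ ε)
    (hrefl : ∀ x : X, ρ x x = 0) (hsymm : ∀ x y : X, ρ x y = ρ y x)
    (hbdd : BddAbove (sepSet Z ρ ε)) :
    spanNum Z ρ ε ≤ sepNum Z ρ ε := by
  classical
  obtain ⟨S, hSZ, hcard, hsep⟩ := Nat.sSup_mem ⟨0, zero_mem_sepSet Z ρ ε⟩ hbdd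
  rw [sepNum_eq_sSup, ← hcard]
  refine spanNum_le_of_span S ?_
  intro x hx
  by_contra hc
  push_neg at hc
  have hxS : x ∉ S := by
    intro hxS
    exact absurd (hc x hxS) (not_lt.2 (le_of_eq (hrefl x) |>.trans hε))
  have hmem : (S.card + 1) ∈ sepSet Z ρ ε := by
    refine ⟨insert x S, ?_, ?_, ?_⟩
    · rw [Finset.coe_insert]
      exact Set.insert_subset hx hSZ
    · rw [Finset.card_insert_of_notMem hxS]
    · intro a ha b hb hne
      rcases Finset.mem_insert.1 ha with hax | haS
      · rcases Finset.mem_insert.1 hb with hbx | hbS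
        · exact absurd (hax.trans hbx.symm) hne
        · subst hax
          exact hc b hbS
      · rcases Finset.mem_insert.1 hb with hbx | hbS
        · subst hbx
          rw [hsymm]
          exact hc a haS
        · exact hsep a haS b hbS hne
  have := le_csSup hbdd hmem
  omega

lemma sepNum_mono_rho {Z : Set X} {ρ ρ' : X → X → ℝ} {ε : ℝ}
    (h : ∀ x y : X, ρ x y ≤ ρ' x y) (hbdd' : BddAbove (sepSet Z ρ' ε)) :
    sepNum Z ρ ε ≤ sepNum Z ρ' ε := by
  rw [sepNum_eq_sSup, sepNum_eq_sSup]
  refine csSup_le_csSup hbdd' ⟨0, zero_mem_sepSet Z ρ ε⟩ ?_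
  rintro n ⟨S, hSZ, rfl, hsep⟩
  exact ⟨S, hSZ, rfl, fun x hx y hy hne => (hsep x hx y hy hne).trans_le (h x y)⟩

/-- Multiplication by a positive real constant as an order isomorphism of `EReal`. -/
lemma EReal_inv_cancel_mul {c : ℝ} (hc : 0 < c) (x : EReal) :
    ((c⁻¹ : ℝ) : EReal) * ((c : EReal) * x) = x := by
  rw [← mul_assoc, ← EReal.coe_mul, inv_mul_cancel₀ hc.ne', EReal.coe_one, one_mul]

lemma EReal_cancel_inv_mul {c : ℝ} (hc : 0 < c) (x : EReal) :
    ((c : ℝ) : EReal) * (((c⁻¹ : ℝ) : EReal) * x) = x := by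
  rw [← mul_assoc, ← EReal.coe_mul, mul_inv_cancel₀ hc.ne', EReal.coe_one, one_mul]

noncomputable def ERealMulIso (c : ℝ) (hc : 0 < c) : EReal ≃o EReal where
  toFun x := (c : EReal) * x
  invFun x := ((c⁻¹ : ℝ) : EReal) * x
  left_inv x := EReal_inv_cancel_mul hc x
  right_inv x := EReal_cancel_inv_mul hc x
  map_rel_iff' := by
    intro a b
    simp only [Equiv.coe_fn_mk]
    constructor
    · intro h
      have h2 := mul_le_mul_of_nonneg_left h
        (by exact_mod_cast (inv_pos.2 hc).le : (0:EReal) ≤ ((c⁻¹ : ℝ) : EReal))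
      rwa [EReal_inv_cancel_mul hc, EReal_inv_cancel_mul hc] at h2
    · intro h
      exact mul_le_mul_of_nonneg_left h (by exact_mod_cast hc.le : (0:EReal) ≤ (c : EReal))

lemma limsup_coe_mul {α : Type*} {F : Filter α} (f : α → EReal) {c : ℝ} (hc : 0 < c) :
    Filter.limsup (fun x => (c : EReal) * f x) F = (c : EReal) * Filter.limsup f F :=
  ((ERealMulIso c hc).limsup_apply (u := f)).symm

lemma liminf_coe_mul {α : Type*} {F : Filter α} (f : α → EReal) {c : ℝ} (hc : 0 < c) :
    Filter.liminf (fun x => (c : EReal) * f x) F = (c : EReal) * Filter.liminf f F :=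
  ((ERealMulIso c hc).liminf_apply (u := f)).symm

lemma EReal_le_of_forall_mul (x D : EReal) (hD : 0 ≤ D)
    (h : ∀ q : ℝ, 1 < q → x ≤ (q : EReal) * D) : x ≤ D := by
  induction D with
  | bot => exact absurd hD (by simp)
  | top => exact le_top
  | coe m =>
    have hm : 0 ≤ m := by exact_mod_cast hD
    rcases eq_or_lt_of_le hm with hm0 | hm0
    · have := h 2 one_lt_two
      rw [← hm0] at this ⊢
      simpa using this
    · by_contra hcon
      push_neg at hcon
      obtain ⟨r, hr1, hr2⟩ := EReal.exists_between_coe_real hcon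
      have hq : (1:ℝ) < r / m := by
        rw [lt_div_iff₀ hm0, one_mul]
        exact_mod_cast hr1
      have := h (r / m) hq
      rw [← EReal.coe_mul, div_mul_cancel₀ _ hm0.ne'] at this
      exact absurd (this.trans_lt hr2) (lt_irrefl _)

lemma map_div_nhdsWithin_Ioi (c : ℝ) (hc : 0 < c) :
    Filter.map (fun ε : ℝ => ε / c) (𝓝[>] (0:ℝ)) = 𝓝[>] (0:ℝ) := by
  have key : ∀ d : ℝ, 0 < d → Filter.Tendsto (fun ε : ℝ => ε / d) (𝓝[>] (0:ℝ)) (𝓝[>] (0:ℝ)) := by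
    intro d hd
    rw [tendsto_nhdsWithin_iff]
    constructor
    · have : Filter.Tendsto (fun ε : ℝ => ε / d) (𝓝 (0:ℝ)) (𝓝 ((0:ℝ)/d)) :=
        (continuous_id.div_const d).tendsto 0
      rw [zero_div] at this
      exact this.mono_left nhdsWithin_le_nhds
    · exact eventually_mem_nhdsWithin.mono (fun x hx => div_pos hx hd)
  refine le_antisymm (key c hc) ?_
  have h2 := Filter.map_mono (m := fun ε : ℝ => ε / c) (key c⁻¹ (inv_pos.2 hc))
  rw [Filter.map_map] at h2
  have : ((fun ε : ℝ => ε / c) ∘ fun ε : ℝ => ε / c⁻¹) = id := by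
    funext x
    simp only [Function.comp_apply, id_eq, div_eq_mul_inv, inv_inv]
    rw [mul_assoc, mul_inv_cancel₀ hc.ne', mul_one]
  rwa [this, Filter.map_id] at h2

end AuxLemmas

section BowenLemmas

variable {G : Type*} [Group G] [Fintype G] {X : Type*} [MetricSpace X] [MulAction G X]

lemma bowenD_set_nonempty (x y : X) :
    ((fun g : G => dist (g • x) (g • y)) '' ↑(Finset.univ : Finset G)).Nonempty :=
  ⟨dist ((1:G) • x) ((1:G) • y), ⟨1, by simp, rfl⟩⟩

lemma bowenD_set_bddAbove (x y : X) :
    BddAbove ((fun g : G => dist (g • x) (g • y)) '' ↑(Finset.univ : Finset G)) :=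
  ((Finset.finite_toSet _).image _).bddAbove

lemma dist_le_bowenD (x y : X) :
    dist x y ≤ bowen (fun (g : G) (x : X) => g • x) dist Finset.univ x y := by
  have h : dist x y ∈ ((fun g : G => dist (g • x) (g • y)) '' ↑(Finset.univ : Finset G)) :=
    ⟨1, by simp, by simp⟩
  exact le_csSup (bowenD_set_bddAbove x y) h

lemma bowenD_le_of_lip {K : ℝ} (hK : ∀ g : G, ∀ x y : X, dist (g • x) (g • y) ≤ K * dist x y)
    (x y : X) :
    bowen (fun (g : G) (x : X) => g • x) dist Finset.univ x y ≤ K * dist x y := by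
  refine csSup_le (bowenD_set_nonempty x y) ?_
  rintro _ ⟨g, -, rfl⟩
  exact hK g x y

lemma bowenD_self (x : X) :
    bowen (fun (g : G) (x : X) => g • x) dist Finset.univ x x = 0 := by
  refine le_antisymm ?_ ?_
  · refine csSup_le (bowenD_set_nonempty x x) ?_
    rintro _ ⟨g, -, rfl⟩
    simp
  · simpa using dist_le_bowenD (G := G) x x

lemma bowenD_comm (x y : X) :
    bowen (fun (g : G) (x : X) => g • x) dist Finset.univ x y
      = bowen (fun (g : G) (x : X) => g • x) dist Finset.univ y x := by
  unfold bowen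
  congr 1
  ext r
  constructor
  · rintro ⟨g, hg, rfl⟩
    exact ⟨g, hg, dist_comm _ _⟩
  · rintro ⟨g, hg, rfl⟩
    exact ⟨g, hg, dist_comm _ _⟩

lemma bowenD_tri (a b z : X) :
    bowen (fun (g : G) (x : X) => g • x) dist Finset.univ a b
      ≤ bowen (fun (g : G) (x : X) => g • x) dist Finset.univ a z
        + bowen (fun (g : G) (x : X) => g • x) dist Finset.univ b z := by
  refine csSup_le (bowenD_set_nonempty a b) ?_
  rintro _ ⟨g, -, rfl⟩
  have h1 : dist (g • a) (g • b) ≤ dist (g • a) (g • z) + dist (g • b) (g • z) :=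
    dist_triangle_right _ _ _
  refine h1.trans (add_le_add ?_ ?_)
  · exact le_csSup (bowenD_set_bddAbove a z) ⟨g, by simp, rfl⟩
  · exact le_csSup (bowenD_set_bddAbove b z) ⟨g, by simp, rfl⟩

end BowenLemmas

section CoreLemma

lemma core_dim_eq (A S : ℝ → ℕ) (c : ℝ) (hc1 : 1 < c)
    (hAS : ∀ ε : ℝ, 0 < ε → A ε ≤ S ε)
    (hSA : ∀ ε : ℝ, 0 < ε → S ε ≤ A (ε / c))
    (hA1 : ∀ ε : ℝ, 0 < ε → 1 ≤ A ε) :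
    Filter.limsup (fun ε : ℝ => ((Real.log (S ε) / Real.log (1/ε) : ℝ) : EReal)) (𝓝[>] (0:ℝ))
      = Filter.limsup (fun ε : ℝ => ((Real.log (A ε) / Real.log (1/ε) : ℝ) : EReal)) (𝓝[>] (0:ℝ))
    ∧ Filter.liminf (fun ε : ℝ => ((Real.log (S ε) / Real.log (1/ε) : ℝ) : EReal)) (𝓝[>] (0:ℝ))
      = Filter.liminf (fun ε : ℝ => ((Real.log (A ε) / Real.log (1/ε) : ℝ) : EReal)) (𝓝[>] (0:ℝ)) := by
  have hc0 : 0 < c := lt_trans one_pos hc1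
  set fA : ℝ → EReal := fun ε => ((Real.log (A ε) / Real.log (1/ε) : ℝ) : EReal) with hfA
  set fS : ℝ → EReal := fun ε => ((Real.log (S ε) / Real.log (1/ε) : ℝ) : EReal) with hfS
  have hI01 : ∀ᶠ ε : ℝ in 𝓝[>] (0:ℝ), ε ∈ Set.Ioo (0:ℝ) 1 :=
    Ioo_mem_nhdsGT_of_mem ⟨le_refl 0, one_pos⟩
  have hLpos : ∀ ε : ℝ, ε ∈ Set.Ioo (0:ℝ) 1 → 0 < Real.log (1/ε) := by
    intro ε hε
    rw [one_div, Real.log_inv]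
    have := Real.log_neg hε.1 hε.2
    linarith
  have hu0 : ∀ ε : ℝ, ε ∈ Set.Ioo (0:ℝ) 1 → (0:EReal) ≤ fA ε := by
    intro ε hε
    have h : (0:ℝ) ≤ Real.log (A ε) / Real.log (1/ε) :=
      div_nonneg (Real.log_nonneg (by exact_mod_cast hA1 ε hε.1)) (hLpos ε hε).le
    rw [hfA]
    show (0:EReal) ≤ ((Real.log (A ε) / Real.log (1/ε) : ℝ) : EReal)
    exact_mod_cast h
  have hev1 : fA ≤ᶠ[𝓝[>] (0:ℝ)] fS := by
    filter_upwards [hI01] with ε hε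
    rw [hfA, hfS]
    simp only [EReal.coe_le_coe_iff]
    have h1 : (0:ℝ) < (A ε : ℝ) := by exact_mod_cast hA1 ε hε.1
    have h2 : Real.log (A ε) ≤ Real.log (S ε) :=
      Real.log_le_log h1 (by exact_mod_cast hAS ε hε.1)
    have hL := hLpos ε hε
    gcongr
  have hLtop : Filter.Tendsto (fun ε : ℝ => Real.log (1/ε)) (𝓝[>] (0:ℝ)) Filter.atTop := by
    have h1 : Filter.Tendsto (fun ε : ℝ => 1/ε) (𝓝[>] (0:ℝ)) Filter.atTop := by
      simpa only [one_div] using tendsto_inv_nhdsGT_zero (𝕜 := ℝ)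
    exact Real.tendsto_log_atTop.comp h1
  have hev2 : ∀ q : ℝ, 1 < q → ∀ᶠ ε in 𝓝[>] (0:ℝ),
      fS ε ≤ (((q * (Real.log (A (ε/c)) / Real.log (1/(ε/c)))) : ℝ) : EReal) := by
    intro q hq
    have hev3 : ∀ᶠ ε in 𝓝[>] (0:ℝ), Real.log c / (q - 1) ≤ Real.log (1/ε) :=
      hLtop.eventually_ge_atTop _
    filter_upwards [hI01, hev3] with ε hε hε3
    have hL : 0 < Real.log (1/ε) := hLpos ε hε
    have hεc : ε / c ∈ Set.Ioo (0:ℝ) 1 :=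
      ⟨div_pos hε.1 hc0, (div_lt_one hc0).2 (lt_trans hε.2 hc1)⟩
    have hL' : Real.log (1/(ε/c)) = Real.log c + Real.log (1/ε) := by
      rw [one_div_div, Real.log_div hc0.ne' hε.1.ne', one_div, Real.log_inv]
      ring
    have hlogc : 0 ≤ Real.log c := Real.log_nonneg hc1.le
    have hq1 : Real.log c ≤ (q - 1) * Real.log (1/ε) := by
      have := (div_le_iff₀ (by linarith : (0:ℝ) < q - 1)).1 hε3
      linarith
    rw [hfS]
    simp only [EReal.coe_le_coe_iff]
    have hA0 : (0:ℝ) < (A ε : ℝ) := by exact_mod_cast hA1 ε hε.1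
    have hS0 : (0:ℝ) < (S ε : ℝ) := lt_of_lt_of_le hA0 (by exact_mod_cast hAS ε hε.1)
    have hA'1 : (1:ℝ) ≤ (A (ε/c) : ℝ) := by exact_mod_cast hA1 (ε/c) hεc.1
    have hA'0 : (0:ℝ) ≤ Real.log (A (ε/c)) := Real.log_nonneg hA'1
    have step1 : Real.log (S ε) / Real.log (1/ε) ≤ Real.log (A (ε/c)) / Real.log (1/ε) := by
      have h2 : Real.log (S ε) ≤ Real.log (A (ε/c)) :=
        Real.log_le_log hS0 (by exact_mod_cast hSA ε hε.1)
      gcongr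
    have step2 : Real.log (A (ε/c)) / Real.log (1/ε)
        = (Real.log (A (ε/c)) / (Real.log c + Real.log (1/ε)))
          * ((Real.log c + Real.log (1/ε)) / Real.log (1/ε)) := by
      rw [div_mul_div_comm, mul_comm (Real.log (A (ε/c))) _, ← div_mul_div_comm,
        div_self (by linarith : Real.log c + Real.log (1/ε) ≠ 0), one_mul]
    have step3 : (Real.log c + Real.log (1/ε)) / Real.log (1/ε) ≤ q := by
      rw [div_le_iff₀ hL]
      nlinarith
    calc Real.log (S ε) / Real.log (1/ε)
        ≤ Real.log (A (ε/c)) / Real.log (1/ε) := step1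
      _ = (Real.log (A (ε/c)) / (Real.log c + Real.log (1/ε)))
          * ((Real.log c + Real.log (1/ε)) / Real.log (1/ε)) := step2
      _ ≤ (Real.log (A (ε/c)) / (Real.log c + Real.log (1/ε))) * q :=
          mul_le_mul_of_nonneg_left step3 (div_nonneg hA'0 (by linarith))
      _ = q * (Real.log (A (ε/c)) / Real.log (1/(ε/c))) := by rw [hL']; ring
  have hD0 : (0:EReal) ≤ Filter.limsup fA (𝓝[>] (0:ℝ)) :=
    le_limsup_of_frequently_le ((hI01.mono hu0).frequently)
  have hd0 : (0:EReal) ≤ Filter.liminf fA (𝓝[>] (0:ℝ)) :=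
    le_liminf_of_le (h := hI01.mono hu0)
  have hmapsup : Filter.limsup (fun ε : ℝ => fA (ε / c)) (𝓝[>] (0:ℝ))
      = Filter.limsup fA (𝓝[>] (0:ℝ)) := by
    rw [show (fun ε : ℝ => fA (ε / c)) = fA ∘ (fun ε : ℝ => ε / c) from rfl,
      Filter.limsup_comp, map_div_nhdsWithin_Ioi c hc0]
  have hmapinf : Filter.liminf (fun ε : ℝ => fA (ε / c)) (𝓝[>] (0:ℝ))
      = Filter.liminf fA (𝓝[>] (0:ℝ)) := by
    rw [show (fun ε : ℝ => fA (ε / c)) = fA ∘ (fun ε : ℝ => ε / c) from rfl,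
      Filter.liminf_comp, map_div_nhdsWithin_Ioi c hc0]
  have hcoe : ∀ q : ℝ, (fun ε : ℝ =>
      (((q * (Real.log (A (ε/c)) / Real.log (1/(ε/c)))) : ℝ) : EReal))
      = fun ε : ℝ => (q : EReal) * fA (ε/c) := by
    intro q
    funext ε
    rw [hfA]
    exact EReal.coe_mul _ _
  constructor
  · refine le_antisymm ?_ (limsup_le_limsup hev1)
    refine EReal_le_of_forall_mul _ _ hD0 ?_
    intro q hq
    calc Filter.limsup fS (𝓝[>] (0:ℝ))
        ≤ Filter.limsup (fun ε : ℝ =>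
            (((q * (Real.log (A (ε/c)) / Real.log (1/(ε/c)))) : ℝ) : EReal)) (𝓝[>] (0:ℝ)) :=
          limsup_le_limsup (hev2 q hq)
      _ = Filter.limsup (fun ε : ℝ => (q : EReal) * fA (ε/c)) (𝓝[>] (0:ℝ)) := by rw [hcoe q]
      _ = (q : EReal) * Filter.limsup (fun ε : ℝ => fA (ε/c)) (𝓝[>] (0:ℝ)) :=
          limsup_coe_mul _ (lt_trans one_pos hq)
      _ = (q : EReal) * Filter.limsup fA (𝓝[>] (0:ℝ)) := by rw [hmapsup]
  · refine le_antisymm ?_ (liminf_le_liminf hev1)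
    refine EReal_le_of_forall_mul _ _ hd0 ?_
    intro q hq
    calc Filter.liminf fS (𝓝[>] (0:ℝ))
        ≤ Filter.liminf (fun ε : ℝ =>
            (((q * (Real.log (A (ε/c)) / Real.log (1/(ε/c)))) : ℝ) : EReal)) (𝓝[>] (0:ℝ)) :=
          liminf_le_liminf (hev2 q hq)
      _ = Filter.liminf (fun ε : ℝ => (q : EReal) * fA (ε/c)) (𝓝[>] (0:ℝ)) := by rw [hcoe q]
      _ = (q : EReal) * Filter.liminf (fun ε : ℝ => fA (ε/c)) (𝓝[>] (0:ℝ)) :=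
          liminf_coe_mul _ (lt_trans one_pos hq)
      _ = (q : EReal) * Filter.liminf fA (𝓝[>] (0:ℝ)) := by rw [hmapinf]

end CoreLemma

/-- for a finite group `G` acting by homeomorphisms on a compact metric
space, with `T_g` Lipschitz for all `g ≠ e`, the upper (resp. lower) metric mean
dimension (computed along the constant Følner sequence `F_n = G`) is `(1/|G|)` times
the upper (resp. lower) box dimension of `(X,d)`. -/
theorem mdim_finite_group {G : Type*} [Group G] [Fintype G] [DecidableEq G]
    {X : Type*} [MetricSpace X] [CompactSpace X] [MulAction G X] [ContinuousConstSMul G X]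
    (hLip : ∀ g : G, g ≠ 1 → ∃ K : NNReal, LipschitzWith K (fun x : X => g • x)) :
    mdimUpper (fun (g : G) (x : X) => g • x) dist (fun _ => (Finset.univ : Finset G))
        (univ : Set X) =
      (((Fintype.card G : ℝ)⁻¹ : ℝ) : EReal) * dimBUpper (dist : X → X → ℝ) ∧
    mdimLower (fun (g : G) (x : X) => g • x) dist (fun _ => (Finset.univ : Finset G))
        (univ : Set X) =
      (((Fintype.card G : ℝ)⁻¹ : ℝ) : EReal) * dimBLower (dist : X → X → ℝ) := by
  classical
  set T : G → X → X := fun g x => g • x with hT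
  set ρG : X → X → ℝ := bowen T dist Finset.univ with hρG
  set N : ℝ := (Fintype.card G : ℝ) with hN
  have hN0 : (0:ℝ) < N := by
    rw [hN]
    exact_mod_cast Fintype.card_pos
  have hhtop : ∀ ε : ℝ, htopEps T dist (fun _ => (Finset.univ : Finset G)) (univ : Set X) ε
      = ((Real.log (sepNum (univ : Set X) ρG ε) / N : ℝ) : EReal) := by
    intro ε
    have heq : (fun n : ℕ =>
        ((Real.log (sepNum (univ : Set X)
            (bowen T dist ((fun _ => (Finset.univ : Finset G)) n)) ε)
          / ((fun _ => (Finset.univ : Finset G)) n).card : ℝ) : EReal))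
        = fun _ : ℕ => ((Real.log (sepNum (univ : Set X) ρG ε) / N : ℝ) : EReal) := by
      funext n
      simp only [hρG, hN, Finset.card_univ]
    unfold htopEps
    rw [heq]
    exact limsup_const _
  have hmU : mdimUpper T dist (fun _ => (Finset.univ : Finset G)) (univ : Set X)
      = Filter.limsup (fun ε : ℝ =>
          (((N⁻¹ * (Real.log (sepNum (univ : Set X) ρG ε) / Real.log (1/ε))) : ℝ) : EReal))
          (𝓝[>] (0:ℝ)) := by
    unfold mdimUpper
    congr 1
    funext ε
    rw [hhtop ε, ← EReal.coe_div]
    exact EReal.coe_eq_coe_iff.2 (by ring)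
  have hmL : mdimLower T dist (fun _ => (Finset.univ : Finset G)) (univ : Set X)
      = Filter.liminf (fun ε : ℝ =>
          (((N⁻¹ * (Real.log (sepNum (univ : Set X) ρG ε) / Real.log (1/ε))) : ℝ) : EReal))
          (𝓝[>] (0:ℝ)) := by
    unfold mdimLower
    congr 1
    funext ε
    rw [hhtop ε, ← EReal.coe_div]
    exact EReal.coe_eq_coe_iff.2 (by ring)
  have hdU : dimBUpper (dist : X → X → ℝ)
      = Filter.limsup (fun ε : ℝ =>
          ((Real.log (spanNum (univ : Set X) dist ε) / Real.log (1/ε) : ℝ) : EReal))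
          (𝓝[>] (0:ℝ)) := rfl
  have hdL : dimBLower (dist : X → X → ℝ)
      = Filter.liminf (fun ε : ℝ =>
          ((Real.log (spanNum (univ : Set X) dist ε) / Real.log (1/ε) : ℝ) : EReal))
          (𝓝[>] (0:ℝ)) := rfl
  rcases isEmpty_or_nonempty X with hX | hX
  · -- the empty space: everything is 0
    have hsep0 : ∀ ε : ℝ, sepNum (univ : Set X) ρG ε = 0 := by
      intro ε
      rw [sepNum_eq_sSup]
      have hss : sepSet (univ : Set X) ρG ε = {0} := by
        refine Set.eq_singleton_iff_unique_mem.2 ⟨zero_mem_sepSet _ _ _, ?_⟩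
        rintro n ⟨Sf, -, rfl, -⟩
        have : Sf = (∅ : Finset X) := Finset.eq_empty_of_forall_notMem
          (fun x => (IsEmpty.false x).elim)
        simp [this]
      rw [hss, csSup_singleton]
    have hspan0 : ∀ ε : ℝ, spanNum (univ : Set X) dist ε = 0 := by
      intro ε
      have h := spanNum_le_of_span (Z := (univ : Set X)) (ρ := dist) (ε := ε)
        (∅ : Finset X) (fun x _ => (IsEmpty.false x).elim)
      simpa using h
    constructor
    · rw [hmU, hdU]
      simp only [hsep0, hspan0, Nat.cast_zero, Real.log_zero, zero_div, mul_zero,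
        EReal.coe_zero, Filter.limsup_const]
    · rw [hmL, hdL]
      simp only [hsep0, hspan0, Nat.cast_zero, Real.log_zero, zero_div, mul_zero,
        EReal.coe_zero, Filter.liminf_const]
  · -- Lipschitz constants
    have hg : ∀ g : G, ∃ k : ℝ≥0, LipschitzWith k (fun x : X => g • x) := by
      intro g
      by_cases hg1 : g = 1
      · refine ⟨1, ?_⟩
        subst hg1
        have h1 : (fun x : X => (1:G) • x) = id := funext fun x => one_smul G x
        rw [h1]
        exact LipschitzWith.id
      · exact hLip g hg1
    choose Kg hKg using hg
    set KR : ℝ := max 1 ((Finset.univ.sup Kg : ℝ≥0) : ℝ) with hKR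
    have hKR1 : 1 ≤ KR := le_max_left _ _
    have hKR0 : (0:ℝ) < KR := lt_of_lt_of_le one_pos hKR1
    have hdistK : ∀ g : G, ∀ x y : X, dist (g • x) (g • y) ≤ KR * dist x y := by
      intro g x y
      refine ((hKg g).dist_le_mul x y).trans
        (mul_le_mul_of_nonneg_right ?_ dist_nonneg)
      have h1 : Kg g ≤ Finset.univ.sup Kg := Finset.le_sup (Finset.mem_univ g)
      calc ((Kg g : ℝ≥0) : ℝ) ≤ ((Finset.univ.sup Kg : ℝ≥0) : ℝ) := by exact_mod_cast h1
        _ ≤ KR := le_max_right _ _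
    set c : ℝ := 2 * KR with hc
    have hc1 : (1:ℝ) < c := by rw [hc]; nlinarith
    have hc0 : (0:ℝ) < c := lt_trans one_pos hc1
    -- compactness: spanning sets at every scale
    have hcov : ∀ δ : ℝ, 0 < δ →
        ∃ E : Finset X, ∀ x ∈ (univ : Set X), ∃ y ∈ E, dist x y ≤ δ := by
      intro δ hδ
      obtain ⟨t, htf, htc⟩ :=
        (Metric.totallyBounded_iff).1 ((isCompact_univ (X := X)).totallyBounded) δ hδ
      refine ⟨htf.toFinset, fun x _ => ?_⟩
      obtain ⟨y, hy, hxy⟩ := Set.mem_iUnion₂.1 (htc (Set.mem_univ x))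
      exact ⟨y, htf.mem_toFinset.2 hy, (Metric.mem_ball.1 hxy).le⟩
    have hcovG : ∀ δ : ℝ, 0 < δ →
        ∃ E : Finset X, ∀ x ∈ (univ : Set X), ∃ y ∈ E, ρG x y ≤ δ := by
      intro δ hδ
      obtain ⟨E, hE⟩ := hcov (δ / KR) (by positivity)
      refine ⟨E, fun x hx => ?_⟩
      obtain ⟨y, hy, hxy⟩ := hE x hx
      refine ⟨y, hy, ?_⟩
      calc ρG x y ≤ KR * dist x y := bowenD_le_of_lip hdistK x y
        _ ≤ KR * (δ / KR) := mul_le_mul_of_nonneg_left hxy hKR0.le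
        _ = δ := by field_simp
    have hbddG : ∀ ε : ℝ, 0 < ε → BddAbove (sepSet (univ : Set X) ρG ε) := by
      intro ε hε
      obtain ⟨E, hE⟩ := hcovG (ε/2) (by positivity)
      exact sepSet_bddAbove bowenD_tri (by linarith) E hE
    have hAS : ∀ ε : ℝ, 0 < ε →
        spanNum (univ : Set X) dist ε ≤ sepNum (univ : Set X) ρG ε := by
      intro ε hε
      have h1 : spanNum (univ : Set X) dist ε ≤ spanNum (univ : Set X) ρG ε := by
        obtain ⟨E, hcard, hspan⟩ := exists_span_witness (hcovG ε hε)
        refine (spanNum_le_of_span E (fun x hx => ?_)).trans_eq hcard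
        obtain ⟨y, hy, hxy⟩ := hspan x hx
        exact ⟨y, hy, (dist_le_bowenD x y).trans hxy⟩
      exact h1.trans (spanNum_le_sepNum_s9 hε.le bowenD_self bowenD_comm (hbddG ε hε))
    have hSA : ∀ ε : ℝ, 0 < ε →
        sepNum (univ : Set X) ρG ε ≤ spanNum (univ : Set X) dist (ε / c) := by
      intro ε hε
      obtain ⟨E, hcard, hspan⟩ := exists_span_witness (hcov (ε / c) (by positivity))
      have hspanG : ∀ x ∈ (univ : Set X), ∃ y ∈ E, ρG x y ≤ ε / 2 := by
        intro x hx
        obtain ⟨y, hy, hxy⟩ := hspan x hx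
        refine ⟨y, hy, ?_⟩
        calc ρG x y ≤ KR * dist x y := bowenD_le_of_lip hdistK x y
          _ ≤ KR * (ε / c) := mul_le_mul_of_nonneg_left hxy hKR0.le
          _ = ε / 2 := by rw [hc]; field_simp
      exact (sepNum_le_span_card bowenD_tri (by linarith) E hspanG).trans_eq hcard
    have hA1 : ∀ ε : ℝ, 0 < ε → 1 ≤ spanNum (univ : Set X) dist ε := by
      intro ε hε
      obtain ⟨E, hcard, hspan⟩ := exists_span_witness (hcov ε hε)
      obtain ⟨x⟩ := hX
      obtain ⟨y, hy, -⟩ := hspan x (Set.mem_univ x)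
      rw [← hcard]
      exact Finset.card_pos.2 ⟨y, hy⟩
    have key := core_dim_eq (fun ε => spanNum (univ : Set X) dist ε)
      (fun ε => sepNum (univ : Set X) ρG ε) c hc1 hAS hSA hA1
    have hNi : (0:ℝ) < N⁻¹ := inv_pos.2 hN0
    have hcoeN : ∀ (W : ℝ → ℕ), (fun ε : ℝ =>
        (((N⁻¹ * (Real.log (W ε) / Real.log (1/ε))) : ℝ) : EReal))
        = fun ε : ℝ => ((N⁻¹ : ℝ) : EReal)
            * ((Real.log (W ε) / Real.log (1/ε) : ℝ) : EReal) := by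
      intro W
      funext ε
      exact EReal.coe_mul _ _
    constructor
    · rw [hmU]
      calc Filter.limsup (fun ε : ℝ =>
            (((N⁻¹ * (Real.log (sepNum (univ : Set X) ρG ε) / Real.log (1/ε))) : ℝ) : EReal))
            (𝓝[>] (0:ℝ))
          = Filter.limsup (fun ε : ℝ => ((N⁻¹ : ℝ) : EReal)
              * ((Real.log (sepNum (univ : Set X) ρG ε) / Real.log (1/ε) : ℝ) : EReal))
              (𝓝[>] (0:ℝ)) := by
            rw [hcoeN (fun ε => sepNum (univ : Set X) ρG ε)]
        _ = ((N⁻¹ : ℝ) : EReal) * Filter.limsup (fun ε : ℝ =>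
              ((Real.log (sepNum (univ : Set X) ρG ε) / Real.log (1/ε) : ℝ) : EReal))
              (𝓝[>] (0:ℝ)) := limsup_coe_mul _ hNi
        _ = ((N⁻¹ : ℝ) : EReal) * Filter.limsup (fun ε : ℝ =>
              ((Real.log (spanNum (univ : Set X) dist ε) / Real.log (1/ε) : ℝ) : EReal))
              (𝓝[>] (0:ℝ)) := congrArg _ key.1
        _ = ((N⁻¹ : ℝ) : EReal) * dimBUpper (dist : X → X → ℝ) := by rw [← hdU]
    · rw [hmL]
      calc Filter.liminf (fun ε : ℝ =>
            (((N⁻¹ * (Real.log (sepNum (univ : Set X) ρG ε) / Real.log (1/ε))) : ℝ) : EReal))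
            (𝓝[>] (0:ℝ))
          = Filter.liminf (fun ε : ℝ => ((N⁻¹ : ℝ) : EReal)
              * ((Real.log (sepNum (univ : Set X) ρG ε) / Real.log (1/ε) : ℝ) : EReal))
              (𝓝[>] (0:ℝ)) := by
            rw [hcoeN (fun ε => sepNum (univ : Set X) ρG ε)]
        _ = ((N⁻¹ : ℝ) : EReal) * Filter.liminf (fun ε : ℝ =>
              ((Real.log (sepNum (univ : Set X) ρG ε) / Real.log (1/ε) : ℝ) : EReal))
              (𝓝[>] (0:ℝ)) := liminf_coe_mul _ hNi
        _ = ((N⁻¹ : ℝ) : EReal) * Filter.liminf (fun ε : ℝ =>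
              ((Real.log (spanNum (univ : Set X) dist ε) / Real.log (1/ε) : ℝ) : EReal))
              (𝓝[>] (0:ℝ)) := congrArg _ key.2
        _ = ((N⁻¹ : ℝ) : EReal) * dimBLower (dist : X → X → ℝ) := by rw [← hdL]
end

section
/- Fix s ∈ (0,1) and α ∈ (0,∞). Define ε_k = exp(−k^{1/s}) and M_k = ⌊exp(αk)⌋, let E_k = { j·ε_k : j = 1,…,M_k } ⊂ [0,1], and for k₀ large enough let X = {0} ∪ ⋃_{k ≥ k₀} E_k. Then X is a compact subset of [0,1] with limsup_{ε→0} log N_ε(X)/ (log(1/ε))^s = α and upper box dimension 0, where N_ε(X) is the minimal number of open ε-balls needed to cover X. -/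
open Filter Set Topology

/-- `N_ε(Y)`: minimal number of open `ε`-balls needed to cover `Y ⊆ ℝ`. -/
noncomputable def ballCoverNum (Y : Set ℝ) (ε : ℝ) : ℕ :=
  sInf {n : ℕ | ∃ E : Finset ℝ, E.card = n ∧ Y ⊆ ⋃ x ∈ E, Metric.ball x ε}

/-- `ε_k = exp(-k^{1/s})`. -/
noncomputable def epsSeq (s : ℝ) (k : ℕ) : ℝ := Real.exp (-(k : ℝ) ^ (1 / s))

/-- `M_k = ⌊exp(αk)⌋`. -/
noncomputable def MSeq (α : ℝ) (k : ℕ) : ℕ := ⌊Real.exp (α * k)⌋₊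

/-- `E_k = { j·ε_k : j = 1,…,M_k }`. -/
def ESet (s α : ℝ) (k : ℕ) : Set ℝ :=
  {x : ℝ | ∃ j : ℕ, 1 ≤ j ∧ j ≤ MSeq α k ∧ x = (j : ℝ) * epsSeq s k}

/-- `X = {0} ∪ ⋃_{k ≥ k₀} E_k`. -/
def fractalX (s α : ℝ) (k₀ : ℕ) : Set ℝ :=
  {(0 : ℝ)} ∪ ⋃ (k : ℕ) (_ : k₀ ≤ k), ESet s α k

namespace FrA

/-- the set of achievable cover cardinalities -/
def cFam (Y : Set ℝ) (ε : ℝ) : Set ℕ :=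
  {n : ℕ | ∃ E : Finset ℝ, E.card = n ∧ Y ⊆ ⋃ x ∈ E, Metric.ball x ε}

lemma ballCoverNum_def (Y : Set ℝ) (ε : ℝ) : ballCoverNum Y ε = sInf (cFam Y ε) := rfl

lemma ballCoverNum_le_card {Y : Set ℝ} {ε : ℝ} (E : Finset ℝ)
    (h : Y ⊆ ⋃ x ∈ E, Metric.ball x ε) : ballCoverNum Y ε ≤ E.card :=
  Nat.sInf_le ⟨E, rfl, h⟩

lemma exists_cover_Icc {L ε : ℝ} (hε : 0 < ε) (hL : 0 ≤ L) :
    ∃ E : Finset ℝ, E.card ≤ ⌈L / ε⌉₊ + 1 ∧ Icc (0:ℝ) L ⊆ ⋃ x ∈ E, Metric.ball x ε := by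
  refine ⟨(Finset.range (⌈L / ε⌉₊ + 1)).image (fun i : ℕ => (i : ℝ) * ε), ?_, ?_⟩
  · exact Finset.card_image_le.trans (by simp)
  · rintro x ⟨hx0, hxL⟩
    have hxε : 0 ≤ x / ε := div_nonneg hx0 hε.le
    set i := ⌊x / ε⌋₊ with hi
    have h1 : (i : ℝ) * ε ≤ x := by
      have := Nat.floor_le hxε
      calc (i:ℝ) * ε ≤ (x / ε) * ε := by gcongr
        _ = x := by field_simp
    have h2 : x < ((i : ℝ) + 1) * ε := by
      have := Nat.lt_floor_add_one (x / ε)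
      calc x = (x / ε) * ε := by field_simp
        _ < ((i:ℝ) + 1) * ε := by gcongr
    have hmem : i ∈ Finset.range (⌈L / ε⌉₊ + 1) := by
      rw [Finset.mem_range, Nat.lt_succ_iff]
      exact (Nat.floor_le_floor (by gcongr)).trans (Nat.floor_le_ceil _)
    refine Set.mem_iUnion₂.2 ⟨(i : ℝ) * ε, ?_, ?_⟩
    · exact Finset.mem_image.2 ⟨i, hmem, rfl⟩
    · rw [Metric.mem_ball, Real.dist_eq, abs_of_nonneg (by linarith)]
      nlinarith
lemma cFam_nonempty {Y : Set ℝ} {ε : ℝ} (hε : 0 < ε) (hY : Y ⊆ Icc 0 1) :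
    (cFam Y ε).Nonempty := by
  obtain ⟨E, _, hE⟩ := exists_cover_Icc (L := 1) hε zero_le_one
  exact ⟨E.card, E, rfl, hY.trans hE⟩

lemma ballCoverNum_mono {Y Z : Set ℝ} {ε : ℝ} (hYZ : Y ⊆ Z) (hne : (cFam Z ε).Nonempty) :
    ballCoverNum Y ε ≤ ballCoverNum Z ε := by
  obtain ⟨E, hcard, hcov⟩ := Nat.sInf_mem hne
  rw [ballCoverNum_def Z ε, ← hcard]
  exact ballCoverNum_le_card E (hYZ.trans hcov)

lemma ballCoverNum_union_le {Y Z : Set ℝ} {ε : ℝ}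
    (hY : (cFam Y ε).Nonempty) (hZ : (cFam Z ε).Nonempty) :
    ballCoverNum (Y ∪ Z) ε ≤ ballCoverNum Y ε + ballCoverNum Z ε := by
  classical
  obtain ⟨E, hE, hEc⟩ := Nat.sInf_mem hY
  obtain ⟨F, hF, hFc⟩ := Nat.sInf_mem hZ
  have hcov : Y ∪ Z ⊆ ⋃ x ∈ (E ∪ F : Finset ℝ), Metric.ball x ε := by
    rintro x (hx | hx)
    · obtain ⟨c, hc, hxc⟩ := Set.mem_iUnion₂.1 (hEc hx)
      exact Set.mem_iUnion₂.2 ⟨c, Finset.mem_union_left _ hc, hxc⟩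
    · obtain ⟨c, hc, hxc⟩ := Set.mem_iUnion₂.1 (hFc hx)
      exact Set.mem_iUnion₂.2 ⟨c, Finset.mem_union_right _ hc, hxc⟩
  calc ballCoverNum (Y ∪ Z) ε ≤ (E ∪ F).card := ballCoverNum_le_card _ hcov
    _ ≤ E.card + F.card := Finset.card_union_le _ _
    _ = _ := by rw [hE, hF]; rfl

lemma one_le_ballCoverNum {Y : Set ℝ} {ε : ℝ} (hne : Y.Nonempty)
    (hfam : (cFam Y ε).Nonempty) : 1 ≤ ballCoverNum Y ε := by
  obtain ⟨E, hcard, hcov⟩ := Nat.sInf_mem hfam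
  obtain ⟨y, hy⟩ := hne
  obtain ⟨c, hc, -⟩ := Set.mem_iUnion₂.1 (hcov hy)
  refine Nat.pos_of_ne_zero fun h0 => ?_
  rw [ballCoverNum_def] at h0
  rw [Finset.card_eq_zero.1 (hcard.trans h0)] at hc
  exact absurd hc (Finset.notMem_empty c)

lemma ballCoverNum_coe_le {ε : ℝ} (E : Finset ℝ) (hε : 0 < ε) :
    ballCoverNum (↑E) ε ≤ E.card :=
  ballCoverNum_le_card E fun x hx =>
    Set.mem_iUnion₂.2 ⟨x, hx, by simpa [Metric.mem_ball] using hε⟩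

lemma card_le_ballCoverNum {Y : Set ℝ} {ε : ℝ} (S : Finset ℝ) (hS : ↑S ⊆ Y)
    (hsep : ∀ a ∈ S, ∀ b ∈ S, a ≠ b → 2 * ε ≤ |a - b|)
    (hfam : (cFam Y ε).Nonempty) : S.card ≤ ballCoverNum Y ε := by
  obtain ⟨E, hcard, hcov⟩ := Nat.sInf_mem hfam
  rw [ballCoverNum_def, ← hcard]
  have hmap : ∀ a : ℝ, ∃ c : ℝ, a ∈ S → c ∈ E ∧ a ∈ Metric.ball c ε := by
    intro a
    by_cases ha : a ∈ S
    · obtain ⟨c, hc, hxc⟩ := Set.mem_iUnion₂.1 (hcov (hS ha))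
      exact ⟨c, fun _ => ⟨hc, hxc⟩⟩
    · exact ⟨0, fun h => absurd h ha⟩
  choose f hf using hmap
  refine Finset.card_le_card_of_injOn f (fun a ha => (hf a ha).1) ?_
  intro a ha b hb hab
  by_contra hne
  have h1 : |a - f a| < ε := by
    have := (hf a ha).2; rwa [Metric.mem_ball, Real.dist_eq] at this
  have h2 : |b - f b| < ε := by
    have := (hf b hb).2; rwa [Metric.mem_ball, Real.dist_eq] at this
  have h3 := hsep a ha b hb hne
  have h4 : |a - b| ≤ |a - f a| + |f a - b| := abs_sub_le a (f a) b
  rw [hab] at h4 h1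
  have h5 : |f b - b| = |b - f b| := abs_sub_comm _ _
  linarith

end FrA

namespace FrB

/-- the exponent `f(k) = αk - k^{1/s}`, so that `e^{αk}·ε_k = e^{f k}`. -/
noncomputable def fE (s α : ℝ) (k : ℕ) : ℝ := α * k - (k : ℝ) ^ (1 / s)

variable {s α : ℝ} {k₀ : ℕ}

lemma epsSeq_pos (s : ℝ) (k : ℕ) : 0 < epsSeq s k := Real.exp_pos _

lemma rpow_split (hs0 : 0 < s) {k : ℕ} (hk : 1 ≤ k) :
    ((k : ℝ)) ^ (1 / s) = (k : ℝ) * (k : ℝ) ^ (1 / s - 1) := by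
  have hk0 : (0:ℝ) ≤ (k:ℝ) := Nat.cast_nonneg k
  have h : (1 / s) = 1 + (1 / s - 1) := by ring
  conv_lhs => rw [h]
  rw [Real.rpow_one_add' hk0 (by rw [← h]; positivity)]

/-- `Good` hypothesis consequences: `αk ≤ k^{1/s}` i.e. `fE k ≤ 0`. -/
lemma fE_nonpos (hs0 : 0 < s) (hα : 0 < α) {k : ℕ} (hk : 1 ≤ k)
    (hgk : α + 1 ≤ (k : ℝ) ^ (1 / s - 1)) : fE s α k ≤ 0 := by
  have hk0 : (0:ℝ) < (k:ℝ) := by exact_mod_cast hk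
  have h1 : α * k ≤ (k:ℝ) ^ (1/s) := by
    rw [rpow_split hs0 hk]
    calc α * k = (k:ℝ) * α := by ring
      _ ≤ (k:ℝ) * ((k:ℝ) ^ (1/s - 1)) := by
          apply mul_le_mul_of_nonneg_left (by linarith) hk0.le
  simp only [fE]; linarith

/-- gap: `fE (k+1) + 1 ≤ fE k`. -/
lemma fE_succ_le (hs0 : 0 < s) (hs1 : s < 1) (hα : 0 < α) {k : ℕ} (hk : 1 ≤ k)
    (hgk : α + 1 ≤ (k : ℝ) ^ (1 / s - 1)) : fE s α (k + 1) + 1 ≤ fE s α k := by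
  set p : ℝ := 1 / s with hp
  have hp1 : 1 < p := one_lt_one_div hs0 hs1
  have hk0 : (0:ℝ) < (k:ℝ) := by exact_mod_cast hk
  have h1 : ((k:ℝ) + 1) ^ p = (k:ℝ) ^ p * (1 + 1/(k:ℝ)) ^ p := by
    rw [← Real.mul_rpow hk0.le (by positivity)]
    congr 1
    field_simp
  have h2 : 1 + p * (1/(k:ℝ)) ≤ (1 + 1/(k:ℝ)) ^ p := by
    have h0 : (0:ℝ) ≤ 1/(k:ℝ) := by positivity
    exact one_add_mul_self_le_rpow_one_add (by linarith) hp1.le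
  have h3 : (k:ℝ) ^ p = (k:ℝ) * (k:ℝ) ^ (p - 1) := rpow_split hs0 hk
  have hkp : (0:ℝ) < (k:ℝ) ^ p := Real.rpow_pos_of_pos hk0 _
  have e1 : (k:ℝ) ^ p * (1 + p * (1/(k:ℝ))) = (k:ℝ) ^ p + p * (k:ℝ) ^ (p - 1) := by
    rw [h3]; field_simp
  have key : α + 1 ≤ ((k:ℝ) + 1) ^ p - (k:ℝ) ^ p := by
    have hmul := mul_le_mul_of_nonneg_left h2 hkp.le
    rw [e1] at hmul
    have hstep : α + 1 ≤ p * (k:ℝ) ^ (p - 1) := by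
      have hnn : (0:ℝ) ≤ (k:ℝ) ^ (p - 1) := (Real.rpow_pos_of_pos hk0 _).le
      nlinarith
    rw [h1]; linarith
  have hcast : ((k + 1 : ℕ) : ℝ) = (k : ℝ) + 1 := by push_cast; ring
  simp only [fE, hcast, ← hp]
  have : α * ((k:ℝ) + 1) = α * k + α := by ring
  linarith

/-- decay: for `k₀ ≤ j ≤ m` we get `fE m + (m - j) ≤ fE j`. -/
lemma fE_decay (hs0 : 0 < s) (hs1 : s < 1) (hα : 0 < α) (hk₀ : 1 ≤ k₀)
    (hG : ∀ k : ℕ, k₀ ≤ k → α + 1 ≤ (k : ℝ) ^ (1 / s - 1))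
    {j m : ℕ} (hj : k₀ ≤ j) (hjm : j ≤ m) :
    fE s α m + ((m : ℝ) - (j : ℝ)) ≤ fE s α j := by
  induction m, hjm using Nat.le_induction with
  | base => simp
  | succ m hm ih =>
    have h1 : fE s α (m + 1) + 1 ≤ fE s α m :=
      fE_succ_le hs0 hs1 hα (hk₀.trans (hj.trans hm)) (hG m (hj.trans hm))
    have hcast : ((m + 1 : ℕ) : ℝ) = (m : ℝ) + 1 := by push_cast; ring
    rw [hcast]
    linarith

lemma fE_anti (hs0 : 0 < s) (hs1 : s < 1) (hα : 0 < α) (hk₀ : 1 ≤ k₀)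
    (hG : ∀ k : ℕ, k₀ ≤ k → α + 1 ≤ (k : ℝ) ^ (1 / s - 1))
    {j m : ℕ} (hj : k₀ ≤ j) (hjm : j ≤ m) : fE s α m ≤ fE s α j := by
  have := fE_decay hs0 hs1 hα hk₀ hG hj hjm
  have : ((j:ℝ)) ≤ (m:ℝ) := by exact_mod_cast hjm
  linarith [fE_decay hs0 hs1 hα hk₀ hG hj hjm]

lemma MSeq_le (k : ℕ) : (MSeq α k : ℝ) ≤ Real.exp (α * k) :=
  Nat.floor_le (Real.exp_pos _).le

/-- elements of `ESet` lie in `[0, e^{fE k}]`. -/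
lemma ESet_subset_Icc (s α : ℝ) (k : ℕ) :
    ESet s α k ⊆ Icc 0 (Real.exp (fE s α k)) := by
  rintro x ⟨j, hj1, hjM, rfl⟩
  constructor
  · exact mul_nonneg (Nat.cast_nonneg j) (epsSeq_pos s k).le
  · have h1 : (j : ℝ) ≤ (MSeq α k : ℝ) := by exact_mod_cast hjM
    have h2 : (MSeq α k : ℝ) ≤ Real.exp (α * k) := Nat.floor_le (Real.exp_pos _).le
    calc (j:ℝ) * epsSeq s k ≤ Real.exp (α * k) * epsSeq s k := by
          apply mul_le_mul_of_nonneg_right (h1.trans h2) (epsSeq_pos s k).le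
      _ = Real.exp (fE s α k) := by
          rw [epsSeq, ← Real.exp_add, fE, sub_eq_add_neg]

/-- the Finset incarnation of `ESet`. -/
noncomputable def Efin (s α : ℝ) (k : ℕ) : Finset ℝ :=
  (Finset.Icc 1 (MSeq α k)).image (fun j : ℕ => (j : ℝ) * epsSeq s k)

lemma ESet_eq_coe (s α : ℝ) (k : ℕ) : ESet s α k = ↑(Efin s α k) := by
  ext x
  simp only [ESet, Set.mem_setOf_eq, Efin, Finset.coe_image, Set.mem_image,
    Finset.mem_coe, Finset.mem_Icc]
  constructor
  · rintro ⟨j, h1, h2, rfl⟩; exact ⟨j, ⟨h1, h2⟩, rfl⟩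
  · rintro ⟨j, ⟨h1, h2⟩, rfl⟩; exact ⟨j, h1, h2, rfl⟩

lemma Efin_card (s α : ℝ) (k : ℕ) : (Efin s α k).card = MSeq α k := by
  rw [Efin, Finset.card_image_of_injective _ ?_, Nat.card_Icc]
  · omega
  · intro a b hab
    have hne : epsSeq s k ≠ 0 := (epsSeq_pos s k).ne'
    have : (a : ℝ) = b := mul_right_cancel₀ hne hab
    exact_mod_cast this

end FrB

namespace FrC
open FrA FrB

variable {s α : ℝ} {k₀ : ℕ}

/-- The standing hypotheses on `k₀`. -/
structure Good (s α : ℝ) (k₀ : ℕ) : Prop where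
  hs0 : 0 < s
  hs1 : s < 1
  hα : 0 < α
  hk₀ : 1 ≤ k₀
  hG : ∀ k : ℕ, k₀ ≤ k → α + 1 ≤ (k : ℝ) ^ (1 / s - 1)

lemma Good.fE_nonpos' (h : Good s α k₀) {k : ℕ} (hk : k₀ ≤ k) : fE s α k ≤ 0 :=
  FrB.fE_nonpos h.hs0 h.hα (h.hk₀.trans hk) (h.hG k hk)

lemma Good.anti (h : Good s α k₀) {j m : ℕ} (hj : k₀ ≤ j) (hjm : j ≤ m) :
    fE s α m ≤ fE s α j :=
  FrB.fE_anti h.hs0 h.hs1 h.hα h.hk₀ h.hG hj hjm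

lemma X_subset_Icc (h : Good s α k₀) : fractalX s α k₀ ⊆ Icc (0:ℝ) 1 := by
  rintro x (rfl | hx)
  · exact ⟨le_refl _, zero_le_one⟩
  · obtain ⟨k, hk, hxk⟩ := Set.mem_iUnion₂.1 hx
    have h1 := ESet_subset_Icc s α k hxk
    have h2 : Real.exp (fE s α k) ≤ 1 := Real.exp_le_one_iff.2 (h.fE_nonpos' hk)
    exact ⟨h1.1, h1.2.trans h2⟩

lemma X_isClosed (h : Good s α k₀) : IsClosed (fractalX s α k₀) := by
  rw [← isOpen_compl_iff, isOpen_iff_mem_nhds]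
  intro x hx
  rw [Set.mem_compl_iff] at hx
  have hx0 : x ≠ 0 := fun h0 => hx (h0 ▸ Or.inl rfl)
  rcases lt_or_gt_of_ne hx0 with hneg | hpos
  · -- x < 0 : use Iio 0
    have hsub : Iio (0:ℝ) ⊆ (fractalX s α k₀)ᶜ := by
      intro y hy hymem
      have := (X_subset_Icc h hymem).1
      exact absurd this (not_le.2 hy)
    exact Filter.mem_of_superset (Iio_mem_nhds hneg) hsub
  · -- x > 0
    -- choose N with exp (fE N) < x/2 for all k ≥ N
    obtain ⟨N', hN'⟩ := exists_nat_gt (fE s α k₀ + (k₀ : ℝ) - Real.log (x / 2))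
    set N := max N' k₀ with hN
    have hNk₀ : k₀ ≤ N := le_max_right _ _
    have hsmall : ∀ k : ℕ, N < k → Real.exp (fE s α k) < x / 2 := by
      intro k hk
      have h1 : fE s α k + ((k : ℝ) - (k₀ : ℝ)) ≤ fE s α k₀ :=
        FrB.fE_decay h.hs0 h.hs1 h.hα h.hk₀ h.hG (le_refl _) (hNk₀.trans hk.le)
      have h2 : (N' : ℝ) < (k : ℝ) := by
        exact_mod_cast lt_of_le_of_lt (le_max_left N' k₀) hk
      have h3 : fE s α k < Real.log (x / 2) := by linarith
      calc Real.exp (fE s α k) < Real.exp (Real.log (x / 2)) := Real.exp_lt_exp.2 h3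
        _ = x / 2 := Real.exp_log (by linarith)
    -- the finite part
    set C : Set ℝ := ⋃ k ∈ Finset.Icc k₀ N, ESet s α k with hC
    have hCfin : C.Finite := by
      apply Set.Finite.biUnion (Finset.Icc k₀ N).finite_toSet
      intro k _
      rw [ESet_eq_coe]
      exact (Efin s α k).finite_toSet
    have hCX : C ⊆ fractalX s α k₀ := by
      intro y hy
      obtain ⟨k, hk, hyk⟩ := Set.mem_iUnion₂.1 hy
      exact Or.inr (Set.mem_iUnion₂.2 ⟨k, (Finset.mem_Icc.1 hk).1, hyk⟩)
    have hxC : x ∉ C := fun hmem => hx (hCX hmem)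
    have hsub : fractalX s α k₀ ⊆ Iic (x / 2) ∪ C := by
      rintro y (rfl | hy)
      · exact Or.inl (by simp; positivity)
      · obtain ⟨k, hk, hyk⟩ := Set.mem_iUnion₂.1 hy
        by_cases hkN : k ≤ N
        · exact Or.inr (Set.mem_iUnion₂.2 ⟨k, Finset.mem_Icc.2 ⟨hk, hkN⟩, hyk⟩)
        · left
          have h1 := (ESet_subset_Icc s α k hyk).2
          exact h1.trans (hsmall k (not_le.1 hkN)).le
    have hclosed : IsClosed (Iic (x / 2) ∪ C) := isClosed_Iic.union hCfin.isClosed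
    have hxmem : x ∈ (Iic (x / 2) ∪ C)ᶜ := by
      rw [Set.mem_compl_iff, Set.mem_union]
      push_neg
      exact ⟨by simp; linarith, hxC⟩
    exact Filter.mem_of_superset (hclosed.isOpen_compl.mem_nhds hxmem)
      (Set.compl_subset_compl.2 hsub)

lemma X_isCompact (h : Good s α k₀) : IsCompact (fractalX s α k₀) :=
  IsCompact.of_isClosed_subset isCompact_Icc (X_isClosed h) (X_subset_Icc h)

end FrC

namespace FrD
open FrA FrB FrC

variable {s α : ℝ} {k₀ : ℕ}

lemma epsSeq_k₀_lt_one (h : Good s α k₀) : epsSeq s k₀ < 1 := by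
  rw [epsSeq, Real.exp_lt_one_iff, neg_lt_zero]
  have : (1:ℝ) ≤ (k₀ : ℝ) := by exact_mod_cast h.hk₀
  exact Real.rpow_pos_of_pos (by linarith) _

/-- Main upper bound: for `0 < ε ≤ ε_{k₀}`, with `T = log(1/ε)` and `n = ⌊T^s⌋`,
we have `k₀ ≤ n` and `N_ε(X) ≤ (n+4)·e^{α(n+1)}`. -/
lemma main_upper (h : Good s α k₀) {ε : ℝ} (hε0 : 0 < ε) (hεk : ε ≤ epsSeq s k₀) :
    k₀ ≤ ⌊(Real.log (1/ε)) ^ s⌋₊ ∧ 1 ≤ Real.log (1/ε) ∧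
    (ballCoverNum (fractalX s α k₀) ε : ℝ) ≤
      ((⌊(Real.log (1/ε)) ^ s⌋₊ : ℝ) + 4) * Real.exp (α * (⌊(Real.log (1/ε)) ^ s⌋₊ + 1)) := by
  classical
  have hs0 := h.hs0
  have hα := h.hα
  set T : ℝ := Real.log (1/ε) with hT
  set n : ℕ := ⌊T ^ s⌋₊ with hn
  have hk₀R : (1:ℝ) ≤ (k₀ : ℝ) := by exact_mod_cast h.hk₀
  -- T ≥ k₀^(1/s) ≥ 1
  have hTk : ((k₀:ℝ)) ^ (1/s) ≤ T := by
    rw [hT, one_div ε, Real.log_inv]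
    have : Real.log ε ≤ -(k₀:ℝ) ^ (1/s) := by
      calc Real.log ε ≤ Real.log (epsSeq s k₀) :=
            Real.log_le_log hε0 hεk
        _ = -(k₀:ℝ) ^ (1/s) := by rw [epsSeq, Real.log_exp]
    linarith
  have hT1 : (1:ℝ) ≤ T :=
    le_trans (Real.one_le_rpow hk₀R (by positivity)) hTk
  have hT0 : 0 < T := by linarith
  -- k₀ ≤ n
  have hk₀Ts : ((k₀:ℝ)) ≤ T ^ s := by
    calc ((k₀:ℝ)) = ((k₀:ℝ)) ^ ((1/s) * s) := by
          rw [one_div_mul_cancel hs0.ne', Real.rpow_one]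
      _ = (((k₀:ℝ)) ^ (1/s)) ^ s := Real.rpow_mul (Nat.cast_nonneg _) _ _
      _ ≤ T ^ s := by
          apply Real.rpow_le_rpow (by positivity) hTk hs0.le
  have hk₀n : k₀ ≤ n := Nat.le_floor hk₀Ts
  -- ε_{n+1} ≤ ε
  have hεn1 : epsSeq s (n+1) ≤ ε := by
    have h1 : T ^ s < ((n:ℝ) + 1) := by
      have := Nat.lt_floor_add_one (T ^ s)
      push_cast
      exact_mod_cast this
    have h2 : T < ((n:ℝ) + 1) ^ (1/s) := by
      calc T = (T ^ s) ^ (1/s) := by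
            rw [← Real.rpow_mul hT0.le]
            rw [mul_one_div, div_self hs0.ne', Real.rpow_one]
        _ < ((n:ℝ) + 1) ^ (1/s) := by
            apply Real.rpow_lt_rpow (by positivity) h1 (by positivity)
    have h3 : -(((n:ℝ)+1) ^ (1/s)) < Real.log ε := by
      rw [hT, one_div ε, Real.log_inv] at h2
      linarith
    calc epsSeq s (n+1) = Real.exp (-((n:ℕ)+1 : ℝ) ^ (1/s)) := by rw [epsSeq]; norm_num
      _ ≤ Real.exp (Real.log ε) := by
          apply Real.exp_le_exp.2
          push_cast
          linarith
      _ = ε := Real.exp_log hε0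
  refine ⟨hk₀n, hT1, ?_⟩
  -- decomposition
  set L : ℝ := Real.exp (fE s α (n+1)) with hL
  have hL0 : 0 < L := Real.exp_pos _
  have hL1 : L ≤ 1 := Real.exp_le_one_iff.2 (h.fE_nonpos' (hk₀n.trans (Nat.le_succ n)))
  set A : Set ℝ := ⋃ k ∈ Finset.Icc k₀ n, ESet s α k with hA
  have hXsub : fractalX s α k₀ ⊆ A ∪ Icc 0 L := by
    rintro x (rfl | hx)
    · exact Or.inr ⟨le_refl _, hL0.le⟩
    · obtain ⟨k, hk, hxk⟩ := Set.mem_iUnion₂.1 hx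
      by_cases hkn : k ≤ n
      · exact Or.inl (Set.mem_iUnion₂.2 ⟨k, Finset.mem_Icc.2 ⟨hk, hkn⟩, hxk⟩)
      · right
        have h1 := ESet_subset_Icc s α k hxk
        have h2 : fE s α k ≤ fE s α (n+1) :=
          h.anti (hk₀n.trans (Nat.le_succ n)) (by omega)
        exact ⟨h1.1, h1.2.trans (Real.exp_le_exp.2 h2)⟩
  -- A as a Finset
  set AF : Finset ℝ := (Finset.Icc k₀ n).biUnion (fun k => Efin s α k) with hAF
  have hAcoe : A = ↑AF := by
    rw [hA, hAF, Finset.coe_biUnion]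
    apply Set.iUnion₂_congr
    intro k hk
    rw [ESet_eq_coe]
  have hAsub : A ⊆ Icc 0 1 := by
    intro x hx
    obtain ⟨k, hk, hxk⟩ := Set.mem_iUnion₂.1 hx
    refine X_subset_Icc h (Or.inr (Set.mem_iUnion₂.2 ⟨k, (Finset.mem_Icc.1 hk).1, hxk⟩))
  have hBsub : Icc (0:ℝ) L ⊆ Icc 0 1 := Icc_subset_Icc (le_refl _) hL1
  have hcovA : (cFam A ε).Nonempty := cFam_nonempty hε0 hAsub
  have hcovB : (cFam (Icc (0:ℝ) L) ε).Nonempty := cFam_nonempty hε0 hBsub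
  have hcovAB : (cFam (A ∪ Icc 0 L) ε).Nonempty :=
    cFam_nonempty hε0 (Set.union_subset hAsub hBsub)
  -- count A
  have hNA : (ballCoverNum A ε : ℝ) ≤ ((n:ℝ) + 1) * Real.exp (α * n) := by
    have h1 : ballCoverNum A ε ≤ AF.card := by
      rw [hAcoe]; exact ballCoverNum_coe_le AF hε0
    have h2 : AF.card ≤ ∑ k ∈ Finset.Icc k₀ n, (Efin s α k).card :=
      Finset.card_biUnion_le
    have h3 : (∑ k ∈ Finset.Icc k₀ n, ((Efin s α k).card : ℝ)) ≤
        ((n:ℝ) + 1) * Real.exp (α * n) := by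
      calc (∑ k ∈ Finset.Icc k₀ n, ((Efin s α k).card : ℝ))
          ≤ ∑ k ∈ Finset.Icc k₀ n, Real.exp (α * n) := by
            apply Finset.sum_le_sum
            intro k hk
            rw [Efin_card]
            calc ((MSeq α k : ℕ) : ℝ) ≤ Real.exp (α * k) := MSeq_le k
              _ ≤ Real.exp (α * n) := by
                  apply Real.exp_le_exp.2
                  have : (k:ℝ) ≤ (n:ℝ) := by exact_mod_cast (Finset.mem_Icc.1 hk).2
                  nlinarith
        _ = ((Finset.Icc k₀ n).card : ℝ) * Real.exp (α * n) := by
            rw [Finset.sum_const, nsmul_eq_mul]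
        _ ≤ ((n:ℝ) + 1) * Real.exp (α * n) := by
            apply mul_le_mul_of_nonneg_right _ (Real.exp_pos _).le
            rw [Nat.card_Icc]
            calc ((n + 1 - k₀ : ℕ) : ℝ) ≤ ((n + 1 : ℕ) : ℝ) := by
                  exact_mod_cast Nat.sub_le _ _
              _ = (n:ℝ) + 1 := by push_cast; ring
    calc (ballCoverNum A ε : ℝ) ≤ (AF.card : ℝ) := by exact_mod_cast h1
      _ ≤ ∑ k ∈ Finset.Icc k₀ n, ((Efin s α k).card : ℝ) := by
          push_cast
          exact_mod_cast h2
      _ ≤ _ := h3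
  -- count B
  have hNB : (ballCoverNum (Icc (0:ℝ) L) ε : ℝ) ≤ Real.exp (α * ((n:ℝ) + 1)) + 2 := by
    obtain ⟨E, hEcard, hEcov⟩ := exists_cover_Icc (L := L) hε0 hL0.le
    have h1 : ballCoverNum (Icc (0:ℝ) L) ε ≤ ⌈L / ε⌉₊ + 1 :=
      (ballCoverNum_le_card E hEcov).trans hEcard
    have h2 : (⌈L / ε⌉₊ : ℝ) < L / ε + 1 := Nat.ceil_lt_add_one (by positivity)
    have h3 : L / ε ≤ Real.exp (α * ((n:ℝ) + 1)) := by
      rw [div_le_iff₀ hε0]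
      have : L = Real.exp (α * ((n:ℝ)+1)) * epsSeq s (n+1) := by
        rw [hL, epsSeq, ← Real.exp_add, fE]
        congr 1
        push_cast
        ring
      rw [this]
      apply mul_le_mul_of_nonneg_left hεn1 (Real.exp_pos _).le
    calc (ballCoverNum (Icc (0:ℝ) L) ε : ℝ) ≤ (⌈L / ε⌉₊ : ℝ) + 1 := by exact_mod_cast h1
      _ ≤ _ := by linarith
  -- combine
  have hNX : (ballCoverNum (fractalX s α k₀) ε : ℝ) ≤
      ((n:ℝ) + 1) * Real.exp (α * n) + (Real.exp (α * ((n:ℝ) + 1)) + 2) := by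
    have h1 : ballCoverNum (fractalX s α k₀) ε ≤ ballCoverNum (A ∪ Icc 0 L) ε :=
      ballCoverNum_mono hXsub hcovAB
    have h2 := ballCoverNum_union_le hcovA hcovB
    calc (ballCoverNum (fractalX s α k₀) ε : ℝ)
        ≤ (ballCoverNum A ε : ℝ) + (ballCoverNum (Icc (0:ℝ) L) ε : ℝ) := by
          exact_mod_cast (h1.trans h2)
      _ ≤ _ := by linarith
  have hexp1 : (1:ℝ) ≤ Real.exp (α * ((n:ℝ)+1)) := Real.one_le_exp (mul_nonneg hα.le (by positivity))
  have hexp2 : Real.exp (α * (n:ℝ)) ≤ Real.exp (α * ((n:ℝ)+1)) := by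
    apply Real.exp_le_exp.2; nlinarith
  calc (ballCoverNum (fractalX s α k₀) ε : ℝ)
      ≤ ((n:ℝ) + 1) * Real.exp (α * n) + (Real.exp (α * ((n:ℝ) + 1)) + 2) := hNX
    _ ≤ ((n:ℝ) + 4) * Real.exp (α * ((n:ℝ) + 1)) := by nlinarith [(Real.exp_pos (α * (n:ℝ))).le]

/-- Lower bound: `M_k ≤ N_{ε_k/2}(X)` for `k ≥ k₀`. -/
lemma main_lower (h : Good s α k₀) {k : ℕ} (hk : k₀ ≤ k) :
    MSeq α k ≤ ballCoverNum (fractalX s α k₀) (epsSeq s k / 2) := by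
  have hε0 : 0 < epsSeq s k / 2 := half_pos (epsSeq_pos s k)
  have hfam : (cFam (fractalX s α k₀) (epsSeq s k / 2)).Nonempty :=
    cFam_nonempty hε0 (X_subset_Icc h)
  rw [← Efin_card s α k]
  apply card_le_ballCoverNum _ _ _ hfam
  · rw [← ESet_eq_coe]
    intro x hx
    exact Or.inr (Set.mem_iUnion₂.2 ⟨k, hk, hx⟩)
  · intro a ha b hb hne
    rw [Efin, Finset.mem_image] at ha hb
    obtain ⟨i, hi, rfl⟩ := ha
    obtain ⟨j, hj, rfl⟩ := hb
    have hij : i ≠ j := fun hh => hne (by rw [hh])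
    have h1 : (1:ℝ) ≤ |(i:ℝ) - (j:ℝ)| := by
      have h2 : (1:ℤ) ≤ |(i:ℤ) - (j:ℤ)| :=
        Int.one_le_abs (sub_ne_zero.2 (by exact_mod_cast hij))
      calc (1:ℝ) = ((1:ℤ):ℝ) := by norm_num
        _ ≤ (|(i:ℤ) - (j:ℤ)| : ℝ) := by exact_mod_cast h2
        _ = |(i:ℝ) - (j:ℝ)| := by push_cast; rfl
    have heq : |(i:ℝ) * epsSeq s k - (j:ℝ) * epsSeq s k| =
        |(i:ℝ) - (j:ℝ)| * epsSeq s k := by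
      rw [← sub_mul, abs_mul, abs_of_pos (epsSeq_pos s k)]
    rw [heq]
    calc 2 * (epsSeq s k / 2) = 1 * epsSeq s k := by ring
      _ ≤ |(i:ℝ) - (j:ℝ)| * epsSeq s k := by
          apply mul_le_mul_of_nonneg_right h1 (epsSeq_pos s k).le

end FrD

namespace FrF
open FrA FrB FrC FrD

variable {s α : ℝ} {k₀ : ℕ}

/-- subadditivity `(x+1)^s ≤ x^s + 1` for `0 ≤ s ≤ 1`. -/
lemma rpow_add_one_le {x s : ℝ} (hx : 0 ≤ x) (hs0 : 0 ≤ s) (hs1 : s ≤ 1) :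
    (x + 1) ^ s ≤ x ^ s + 1 := by
  lift x to NNReal using hx
  have h := NNReal.rpow_add_le_add_rpow x 1 hs0 hs1
  rw [NNReal.one_rpow] at h
  exact_mod_cast h

/-- `log (x+4) / x → 0`. -/
lemma htlog4 : Tendsto (fun x : ℝ => Real.log (x + 4) / x) atTop (𝓝 0) := by
  have h1 : (fun x : ℝ => Real.log (x + 4)) =o[atTop] (fun x : ℝ => x + 4) :=
    Real.isLittleO_log_id_atTop.comp_tendsto (tendsto_atTop_add_const_right atTop 4 tendsto_id)
  have h2 : (fun x : ℝ => x + 4) =O[atTop] (fun x : ℝ => x) := by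
    apply Asymptotics.IsBigO.of_bound 2
    filter_upwards [eventually_ge_atTop (4:ℝ)] with x hx
    rw [Real.norm_eq_abs, Real.norm_eq_abs, abs_of_nonneg (by linarith), abs_of_nonneg (by linarith)]
    linarith
  exact (h1.trans_isBigO h2).tendsto_div_nhds_zero

/-- the ℕ-sequence bound for the first limsup. -/
lemma glim (hα : 0 < α) :
    Tendsto (fun m : ℕ => (Real.log ((m:ℝ) + 4) + α * ((m:ℝ) + 1)) / (m:ℝ)) atTop (𝓝 α) := by
  have h1 : Tendsto (fun m : ℕ => Real.log ((m:ℝ) + 4) / (m:ℝ)) atTop (𝓝 0) :=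
    htlog4.comp tendsto_natCast_atTop_atTop
  have h2 : Tendsto (fun m : ℕ => α * ((m:ℝ) + 1) / (m:ℝ)) atTop (𝓝 α) := by
    have hb : Tendsto (fun m : ℕ => α + α * (1 / (m:ℝ))) atTop (𝓝 (α + α * 0)) :=
      tendsto_const_nhds.add (tendsto_one_div_atTop_nhds_zero_nat.const_mul α)
    rw [mul_zero, add_zero] at hb
    apply hb.congr'
    filter_upwards [eventually_ge_atTop 1] with m hm
    have hm0 : ((m:ℝ)) ≠ 0 := by
      have : (1:ℝ) ≤ (m:ℝ) := by exact_mod_cast hm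
      linarith
    field_simp
  have := h1.add h2
  rw [zero_add] at this
  apply this.congr
  intro m
  rw [add_div]

/-- the ℕ-sequence lower bound tends to `α`. -/
lemma llim (hα : 0 < α) :
    Tendsto (fun k : ℕ => (α * k - 1) / ((k:ℝ) + 1)) atTop (𝓝 α) := by
  have hb : Tendsto (fun k : ℕ => α - (α + 1) * (1 / ((k:ℝ) + 1))) atTop (𝓝 (α - (α+1) * 0)) :=
    tendsto_const_nhds.sub (tendsto_one_div_add_atTop_nhds_zero_nat.const_mul (α+1))
  rw [mul_zero, sub_zero] at hb
  apply hb.congr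
  intro k
  have hk0 : ((k:ℝ)) + 1 ≠ 0 := by positivity
  field_simp
  ring

lemma hT_atTop : Tendsto (fun ε : ℝ => Real.log (1/ε)) (𝓝[>] (0:ℝ)) atTop := by
  have h : Tendsto (fun ε : ℝ => 1/ε) (𝓝[>] (0:ℝ)) atTop := by
    simpa only [one_div] using (tendsto_inv_nhdsGT_zero (𝕜 := ℝ))
  exact Real.tendsto_log_atTop.comp h

lemma hn_atTop (hs0 : 0 < s) :
    Tendsto (fun ε : ℝ => ⌊(Real.log (1/ε)) ^ s⌋₊) (𝓝[>] (0:ℝ)) atTop :=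
  tendsto_nat_floor_atTop.comp ((tendsto_rpow_atTop hs0).comp hT_atTop)

lemma hu_tendsto (hs0 : 0 < s) :
    Tendsto (fun k : ℕ => epsSeq s k / 2) atTop (𝓝[>] (0:ℝ)) := by
  rw [tendsto_nhdsWithin_iff]
  constructor
  · have hneg : Tendsto (fun k : ℕ => -((k:ℝ) ^ (1/s))) atTop atBot :=
      tendsto_neg_atTop_atBot.comp
        ((tendsto_rpow_atTop (by positivity)).comp tendsto_natCast_atTop_atTop)
    have h0 : Tendsto (fun k : ℕ => epsSeq s k) atTop (𝓝 0) :=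
      Real.tendsto_exp_atBot.comp hneg
    simpa using h0.div_const 2
  · exact Eventually.of_forall fun k => half_pos (epsSeq_pos s k)

lemma div_le_div_of_nonneg_right' {a b c : ℝ} (h : a ≤ b) (hc : 0 < c) :
    a / c ≤ b / c := by gcongr

lemma hH_tendsto (hs0 : 0 < s) (hs1 : s < 1) (hα : 0 < α) :
    Tendsto (fun T : ℝ => (Real.log (T ^ s + 4) + α * (T ^ s + 1)) / T) atTop (𝓝 0) := by
  have h1 : Tendsto (fun T : ℝ => Real.log (T ^ s + 4) / T) atTop (𝓝 0) := by
    apply squeeze_zero' ?_ ?_ htlog4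
    · filter_upwards [eventually_ge_atTop (1:ℝ)] with T hT
      have : (0:ℝ) ≤ T ^ s := Real.rpow_nonneg (by linarith) s
      exact div_nonneg (Real.log_nonneg (by linarith)) (by linarith)
    · filter_upwards [eventually_ge_atTop (1:ℝ)] with T hT
      have hTs : T ^ s ≤ T := by
        calc T ^ s ≤ T ^ (1:ℝ) := Real.rpow_le_rpow_of_exponent_le hT hs1.le
          _ = T := Real.rpow_one T
      have h0 : (0:ℝ) ≤ T ^ s := Real.rpow_nonneg (by linarith) s
      have hlog : Real.log (T ^ s + 4) ≤ Real.log (T + 4) :=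
        Real.log_le_log (by linarith) (by linarith)
      have hT0 : (0:ℝ) < T := by linarith
      exact div_le_div_of_nonneg_right' hlog hT0
  have h2 : Tendsto (fun T : ℝ => α * (T ^ s + 1) / T) atTop (𝓝 0) := by
    have ha : Tendsto (fun T : ℝ => α * T ^ (s - 1)) atTop (𝓝 (α * 0)) := by
      have hb := tendsto_rpow_neg_atTop (y := 1 - s) (by linarith)
      have hc : (fun T : ℝ => T ^ (-(1 - s))) = fun T : ℝ => T ^ (s - 1) := by
        funext T; congr 1; ring
      rw [hc] at hb
      exact hb.const_mul α
    rw [mul_zero] at ha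
    have hb : Tendsto (fun T : ℝ => α / T) atTop (𝓝 0) :=
      tendsto_const_nhds.div_atTop tendsto_id
    have hsum := ha.add hb
    rw [add_zero] at hsum
    apply hsum.congr'
    filter_upwards [eventually_gt_atTop (0:ℝ)] with T hT
    rw [Real.rpow_sub hT, Real.rpow_one]
    field_simp
  have hsum := h1.add h2
  rw [add_zero] at hsum
  apply hsum.congr
  intro T
  rw [add_div]

end FrF

namespace FrF2
open FrA FrB FrC FrD FrF

noncomputable def gseq (α : ℝ) (m : ℕ) : ℝ :=
  (Real.log ((m:ℝ) + 4) + α * ((m:ℝ) + 1)) / (m:ℝ)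

lemma gseq_lim {α : ℝ} (hα : 0 < α) : Tendsto (gseq α) atTop (𝓝 α) := glim hα

noncomputable def Hfun (s α : ℝ) (T : ℝ) : ℝ :=
  (Real.log (T ^ s + 4) + α * (T ^ s + 1)) / T

lemma Hfun_lim {s α : ℝ} (hs0 : 0 < s) (hs1 : s < 1) (hα : 0 < α) :
    Tendsto (Hfun s α) atTop (𝓝 0) := hH_tendsto hs0 hs1 hα

lemma div_le_div_of_pos_le {a b c : ℝ} (ha : 0 ≤ a) (hb : 0 < b) (hbc : b ≤ c) :
    a / c ≤ a / b := by gcongr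

end FrF2

open FrA FrB FrC FrD FrF FrF2 in
/-- for `s ∈ (0,1)` and `α ∈ (0,∞)`, for all sufficiently large `k₀` the
set `X = {0} ∪ ⋃_{k ≥ k₀} E_k` is a compact subset of `[0,1]` with
`limsup_{ε→0⁺} log N_ε(X) / (log(1/ε))^s = α` and upper box dimension `0`. -/
theorem fractalX_limsup_and_boxdim (s α : ℝ) (hs : s ∈ Ioo (0:ℝ) 1) (hα : 0 < α) :
    ∃ K : ℕ, ∀ k₀ : ℕ, K ≤ k₀ →
      IsCompact (fractalX s α k₀) ∧
      fractalX s α k₀ ⊆ Icc (0:ℝ) 1 ∧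
      limsup (fun ε : ℝ =>
          Real.log (ballCoverNum (fractalX s α k₀) ε) / (Real.log (1/ε)) ^ s)
        (𝓝[>] (0:ℝ)) = α ∧
      limsup (fun ε : ℝ =>
          Real.log (ballCoverNum (fractalX s α k₀) ε) / Real.log (1/ε))
        (𝓝[>] (0:ℝ)) = 0 := by
  classical
  obtain ⟨hs0, hs1⟩ := hs
  have hpow : Tendsto (fun k : ℕ => (k:ℝ) ^ (1/s - 1)) atTop atTop := by
    apply (tendsto_rpow_atTop ?_).comp tendsto_natCast_atTop_atTop
    have : 1 < 1/s := one_lt_one_div hs0 hs1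
    linarith
  obtain ⟨K₁, hK₁⟩ := Filter.eventually_atTop.1 (hpow.eventually_ge_atTop (α + 1))
  refine ⟨max K₁ 1, fun k₀ hk₀ => ?_⟩
  have hGood : Good s α k₀ :=
    ⟨hs0, hs1, hα, le_trans (le_max_right _ _) hk₀,
     fun k hk => hK₁ k (le_trans (le_trans (le_max_left _ _) hk₀) hk)⟩
  have hk₀1 : 1 ≤ k₀ := hGood.hk₀
  set X : Set ℝ := fractalX s α k₀ with hXdef
  set F₁ : ℝ → ℝ := fun ε : ℝ =>
    Real.log (ballCoverNum X ε) / (Real.log (1/ε)) ^ s with hF₁def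
  set F₂ : ℝ → ℝ := fun ε : ℝ =>
    Real.log (ballCoverNum X ε) / Real.log (1/ε) with hF₂def
  -- the common eventual bounds
  have hev : ∀ᶠ ε in 𝓝[>] (0:ℝ),
      (F₁ ε ≤ gseq α (⌊(Real.log (1/ε)) ^ s⌋₊) ∧ 0 ≤ F₁ ε) ∧
      (F₂ ε ≤ Hfun s α (Real.log (1/ε)) ∧ 0 ≤ F₂ ε) := by
    have hIoo : Ioo (0:ℝ) (epsSeq s k₀) ∈ 𝓝[>] (0:ℝ) :=
      Ioo_mem_nhdsGT (epsSeq_pos s k₀)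
    filter_upwards [hIoo] with ε hε
    obtain ⟨hε0, hεlt⟩ := hε
    obtain ⟨hk₀n, hT1, hNb⟩ := main_upper hGood hε0 hεlt.le
    set T : ℝ := Real.log (1/ε) with hTdef
    set n : ℕ := ⌊T ^ s⌋₊ with hndef
    have hT0 : (0:ℝ) < T := by linarith
    have hTs0 : (0:ℝ) < T ^ s := Real.rpow_pos_of_pos hT0 s
    have hnT : (n:ℝ) ≤ T ^ s := Nat.floor_le (Real.rpow_nonneg hT0.le s)
    have hn1 : (1:ℝ) ≤ (n:ℝ) := by exact_mod_cast hk₀1.trans hk₀n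
    have hN1 : 1 ≤ ballCoverNum X ε :=
      one_le_ballCoverNum ⟨0, Or.inl rfl⟩ (cFam_nonempty hε0 (X_subset_Icc hGood))
    have hN1R : (1:ℝ) ≤ (ballCoverNum X ε : ℝ) := by exact_mod_cast hN1
    have hlogN0 : 0 ≤ Real.log (ballCoverNum X ε) := Real.log_nonneg hN1R
    have hlogN : Real.log (ballCoverNum X ε) ≤ Real.log ((n:ℝ) + 4) + α * ((n:ℝ) + 1) := by
      have hb := Real.log_le_log (by linarith) hNb
      rwa [Real.log_mul (by linarith) (Real.exp_ne_zero _), Real.log_exp] at hb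
    have hnum0 : (0:ℝ) ≤ Real.log ((n:ℝ) + 4) := Real.log_nonneg (by linarith)
    have hnum0' : (0:ℝ) ≤ Real.log ((n:ℝ) + 4) + α * ((n:ℝ) + 1) := by nlinarith
    refine ⟨⟨?_, div_nonneg hlogN0 hTs0.le⟩, ⟨?_, div_nonneg hlogN0 hT0.le⟩⟩
    · calc F₁ ε = Real.log (ballCoverNum X ε) / T ^ s := rfl
        _ ≤ (Real.log ((n:ℝ) + 4) + α * ((n:ℝ) + 1)) / T ^ s :=
            div_le_div_of_nonneg_right' hlogN hTs0
        _ ≤ (Real.log ((n:ℝ) + 4) + α * ((n:ℝ) + 1)) / (n:ℝ) :=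
            div_le_div_of_pos_le hnum0' (by linarith) hnT
        _ = gseq α n := rfl
    · have e1 : Real.log ((n:ℝ) + 4) ≤ Real.log (T ^ s + 4) :=
        Real.log_le_log (by linarith) (by linarith)
      have e2 : α * ((n:ℝ) + 1) ≤ α * (T ^ s + 1) := by nlinarith
      calc F₂ ε = Real.log (ballCoverNum X ε) / T := rfl
        _ ≤ (Real.log (T ^ s + 4) + α * (T ^ s + 1)) / T :=
            div_le_div_of_nonneg_right' (by linarith) hT0
        _ = Hfun s α T := rfl
  -- the frequent lower bound for F₁
  have hLB : ∀ c : ℝ, c < α → ∀ᶠ k : ℕ in atTop, c ≤ F₁ (epsSeq s k / 2) := by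
    intro c hc
    have hαk : ∀ᶠ k : ℕ in atTop, (1:ℝ) ≤ α * k := by
      have ht : Tendsto (fun k : ℕ => α * (k:ℝ)) atTop atTop :=
        (tendsto_natCast_atTop_atTop).const_mul_atTop hα
      exact ht.eventually_ge_atTop 1
    filter_upwards [eventually_ge_atTop k₀, eventually_ge_atTop 1, hαk,
      (llim hα).eventually (eventually_gt_nhds hc)] with k hk hk1 hα1 hlk
    set εk : ℝ := epsSeq s k / 2 with hεkdef
    have hε0 : (0:ℝ) < εk := half_pos (epsSeq_pos s k)
    have hMN : MSeq α k ≤ ballCoverNum X εk := main_lower hGood hk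
    have hM : Real.exp (α * k) - 1 < (MSeq α k : ℝ) := Nat.sub_one_lt_floor _
    have h2e : (2:ℝ) < Real.exp 1 := by
      have := Real.exp_one_gt_d9; linarith
    have hee : Real.exp 1 ≤ Real.exp (α * k) := Real.exp_le_exp.2 (by linarith)
    have hexp : Real.exp (α * k - 1) ≤ Real.exp (α * k) - 1 := by
      rw [Real.exp_sub, div_le_iff₀ (Real.exp_pos 1)]
      nlinarith
    have hNR : Real.exp (α * k - 1) ≤ (ballCoverNum X εk : ℝ) := by
      have : (MSeq α k : ℝ) ≤ (ballCoverNum X εk : ℝ) := by exact_mod_cast hMN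
      linarith
    have hlogN : α * k - 1 ≤ Real.log (ballCoverNum X εk) := by
      have := Real.log_le_log (Real.exp_pos _) hNR
      rwa [Real.log_exp] at this
    set x : ℝ := (k:ℝ) ^ (1/s) with hxdef
    have hkR : (1:ℝ) ≤ (k:ℝ) := by exact_mod_cast hk1
    have hs_inv : (1:ℝ) ≤ 1/s := by
      rw [le_div_iff₀ hs0]; linarith
    have hkx : (k:ℝ) ≤ x := by
      calc (k:ℝ) = (k:ℝ) ^ (1:ℝ) := (Real.rpow_one _).symm
        _ ≤ (k:ℝ) ^ (1/s) := Real.rpow_le_rpow_of_exponent_le hkR hs_inv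
    have hx1 : (1:ℝ) ≤ x := hkR.trans hkx
    have hxs : x ^ s = (k:ℝ) := by
      rw [hxdef, ← Real.rpow_mul (Nat.cast_nonneg k), one_div_mul_cancel hs0.ne',
        Real.rpow_one]
    have hT : Real.log (1/εk) = Real.log 2 + x := by
      have h1 : 1/εk = 2 * Real.exp x := by
        rw [hεkdef, epsSeq, ← hxdef, Real.exp_neg]
        field_simp
      rw [h1, Real.log_mul two_ne_zero (Real.exp_ne_zero _), Real.log_exp]
    have hlog2 : Real.log 2 < 1 := by
      have := Real.log_lt_log two_pos h2e
      rwa [Real.log_exp] at this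
    have hlog2pos : (0:ℝ) < Real.log 2 := Real.log_pos one_lt_two
    have hTpos : (0:ℝ) < Real.log (1/εk) := by rw [hT]; linarith
    have hTs0 : (0:ℝ) < (Real.log (1/εk)) ^ s := Real.rpow_pos_of_pos hTpos s
    have hTs : (Real.log (1/εk)) ^ s ≤ (k:ℝ) + 1 := by
      calc (Real.log (1/εk)) ^ s = (Real.log 2 + x) ^ s := by rw [hT]
        _ ≤ (x + 1) ^ s := Real.rpow_le_rpow (by linarith) (by linarith) hs0.le
        _ ≤ x ^ s + 1 := rpow_add_one_le (by linarith) hs0.le hs1.le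
        _ = (k:ℝ) + 1 := by rw [hxs]
    have hαk0 : (0:ℝ) ≤ α * k - 1 := by linarith
    calc c ≤ (α * k - 1) / ((k:ℝ) + 1) := hlk.le
      _ ≤ (α * k - 1) / ((Real.log (1/εk)) ^ s) :=
          div_le_div_of_pos_le hαk0 hTs0 hTs
      _ ≤ Real.log (ballCoverNum X εk) / ((Real.log (1/εk)) ^ s) :=
          div_le_div_of_nonneg_right' hlogN hTs0
      _ = F₁ εk := rfl
  have hgcomp : Tendsto (fun ε : ℝ => gseq α (⌊(Real.log (1/ε)) ^ s⌋₊))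
      (𝓝[>] (0:ℝ)) (𝓝 α) := (gseq_lim hα).comp (hn_atTop hs0)
  have hHcomp : Tendsto (fun ε : ℝ => Hfun s α (Real.log (1/ε)))
      (𝓝[>] (0:ℝ)) (𝓝 0) := (Hfun_lim hs0 hs1 hα).comp hT_atTop
  refine ⟨X_isCompact hGood, X_subset_Icc hGood, ?_, ?_⟩
  · -- first limsup
    have hub : F₁ ≤ᶠ[𝓝[>] (0:ℝ)] fun ε => gseq α (⌊(Real.log (1/ε)) ^ s⌋₊) :=
      hev.mono fun ε h => h.1.1
    have hnn : ∀ᶠ ε in 𝓝[>] (0:ℝ), 0 ≤ F₁ ε := hev.mono fun ε h => h.1.2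
    have hcob : Filter.IsCoboundedUnder (· ≤ ·) (𝓝[>] (0:ℝ)) F₁ :=
      Filter.IsCoboundedUnder.of_frequently_ge hnn.frequently
    have hbdg : Filter.IsBoundedUnder (· ≤ ·) (𝓝[>] (0:ℝ))
        (fun ε => gseq α (⌊(Real.log (1/ε)) ^ s⌋₊)) := hgcomp.isBoundedUnder_le
    have hle : limsup F₁ (𝓝[>] (0:ℝ)) ≤ α := by
      have h := Filter.limsup_le_limsup hub hcob hbdg
      rwa [hgcomp.limsup_eq] at h
    have hbdF : Filter.IsBoundedUnder (· ≤ ·) (𝓝[>] (0:ℝ)) F₁ := hbdg.mono_le hub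
    have hge : α ≤ limsup F₁ (𝓝[>] (0:ℝ)) := by
      by_contra hlt
      push_neg at hlt
      have hc : (limsup F₁ (𝓝[>] (0:ℝ)) + α) / 2 < α := by linarith
      have hfreq : ∃ᶠ ε in 𝓝[>] (0:ℝ), (limsup F₁ (𝓝[>] (0:ℝ)) + α) / 2 ≤ F₁ ε :=
        (hu_tendsto hs0).frequently ((hLB _ hc).frequently)
      have := Filter.le_limsup_of_frequently_le hfreq hbdF
      linarith
    exact le_antisymm hle hge
  · -- second limsup
    have hub : F₂ ≤ᶠ[𝓝[>] (0:ℝ)] fun ε => Hfun s α (Real.log (1/ε)) :=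
      hev.mono fun ε h => h.2.1
    have hnn : ∀ᶠ ε in 𝓝[>] (0:ℝ), 0 ≤ F₂ ε := hev.mono fun ε h => h.2.2
    have hcob : Filter.IsCoboundedUnder (· ≤ ·) (𝓝[>] (0:ℝ)) F₂ :=
      Filter.IsCoboundedUnder.of_frequently_ge hnn.frequently
    have hbdH : Filter.IsBoundedUnder (· ≤ ·) (𝓝[>] (0:ℝ))
        (fun ε => Hfun s α (Real.log (1/ε))) := hHcomp.isBoundedUnder_le
    have hle : limsup F₂ (𝓝[>] (0:ℝ)) ≤ 0 := by
      have h := Filter.limsup_le_limsup hub hcob hbdH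
      rwa [hHcomp.limsup_eq] at h
    have hbdF : Filter.IsBoundedUnder (· ≤ ·) (𝓝[>] (0:ℝ)) F₂ := hbdH.mono_le hub
    have hge : (0:ℝ) ≤ limsup F₂ (𝓝[>] (0:ℝ)) :=
      Filter.le_limsup_of_frequently_le hnn.frequently hbdF
    exact le_antisymm hle hge
end
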